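/- arXiv:2605.27933 — 12 statements merged into one kernel-verified Lean document; each statement's English description precedes it below -/
import Mathlib

section
/- Let p be an odd prime with p ∤ ab, let e ≥ 1, and let 0 ≤ T < k be integers. Then p^e is (T,k)-good with respect to (a,b) if and only if ord_p(a·b⁻¹) is even and T ≡ ord_{p^e}(a·b⁻¹)/2 (mod gcd(k, ord_{p^e}(a·b⁻¹))). -/
/-! Put `u = a·b⁻¹` in `ZMod (p ^ e)`; then `p ^ e ∣ a ^ m + b ^ m` iff `u ^ m = -1`. As `p` is odd,
`±1` are the only square roots of `1` modulo `p ^ e`, so `u ^ m = -1` exactly when `orderOf u` is even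
and `m ≡ orderOf u / 2 [MOD orderOf u]`. The orders of `u` modulo `p` and modulo `p ^ e` differ by a
factor dividing `p ^ (e - 1)`, hence have the same parity, and by Bézout `k * s + T` (`s > 0`) meets
a residue class modulo `d` iff `T` lies in it modulo `gcd k d`. -/

theorem even_orderOf_of_pow_eq_neg_one {R : Type*} [Ring R] (hne : (-1 : R) ≠ 1) {u : R} {m : ℕ}
    (h : u ^ m = -1) : Even (orderOf u) := by
  by_contra hodd
  have hdvd : orderOf u ∣ m * 2 := orderOf_dvd_of_pow_eq_one (by rw [pow_mul, h, neg_one_sq])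
  have hm : orderOf u ∣ m :=
    (Nat.coprime_two_right.mpr (Nat.not_even_iff_odd.mp hodd)).dvd_of_dvd_mul_right hdvd
  exact hne (h ▸ orderOf_dvd_iff_pow_eq_one.mp hm)

theorem IsOfFinOrder.pow_orderOf_div_two_eq_neg_one {R : Type*} [Ring R] {u : R}
    (hu : IsOfFinOrder u) (hsqrt : ∀ x : R, x ^ 2 = 1 → x = 1 ∨ x = -1)
    (heven : Even (orderOf u)) : u ^ (orderOf u / 2) = -1 := by
  have hpos := hu.orderOf_pos
  have htwo := heven.two_dvd
  refine (hsqrt _ ?_).resolve_left fun h => ?_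
  · rw [← pow_mul, Nat.div_mul_cancel htwo, pow_orderOf_eq_one]
  · have := Nat.le_of_dvd (by omega) (orderOf_dvd_of_pow_eq_one h)
    omega

theorem IsOfFinOrder.pow_eq_neg_one_iff {R : Type*} [Ring R] {u : R} (hu : IsOfFinOrder u)
    (hsqrt : ∀ x : R, x ^ 2 = 1 → x = 1 ∨ x = -1) (hne : (-1 : R) ≠ 1) (m : ℕ) :
    u ^ m = -1 ↔ Even (orderOf u) ∧ m ≡ orderOf u / 2 [MOD orderOf u] := by
  constructor
  · intro h
    have heven := even_orderOf_of_pow_eq_neg_one hne h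
    refine ⟨heven, hu.pow_eq_pow_iff_modEq.mp ?_⟩
    rw [h, hu.pow_orderOf_div_two_eq_neg_one hsqrt heven]
  · rintro ⟨heven, hm⟩
    rw [hu.pow_eq_pow_iff_modEq.mpr hm, hu.pow_orderOf_div_two_eq_neg_one hsqrt heven]

theorem Nat.even_iff_of_dvd_of_dvd_mul_odd {m n q : ℕ} (hq : Odd q) (hmn : m ∣ n)
    (hnm : n ∣ m * q) : Even m ↔ Even n := by
  refine ⟨fun h => even_iff_two_dvd.mpr (h.two_dvd.trans hmn), fun h => ?_⟩
  have hmq : Even (m * q) := even_iff_two_dvd.mpr (h.two_dvd.trans hnm)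
  exact (Nat.even_mul.mp hmq).resolve_right (Nat.not_even_iff_odd.mpr hq)

theorem Nat.exists_pos_mul_add_modEq_iff {k T r d : ℕ} (hd : 0 < d) :
    (∃ s, 0 < s ∧ k * s + T ≡ r [MOD d]) ↔ T ≡ r [MOD k.gcd d] := by
  constructor
  · rintro ⟨s, -, h⟩
    have hks : k * s ≡ 0 [MOD k.gcd d] :=
      Nat.modEq_zero_iff_dvd.mpr ((Nat.gcd_dvd_left k d).mul_right s)
    simpa using (hks.add_right T).symm.trans (h.of_dvd (Nat.gcd_dvd_right k d))
  · intro h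
    have : NeZero d := ⟨hd.ne'⟩
    obtain ⟨c, hc⟩ := Nat.modEq_iff_dvd.mp h
    -- `k * gcdA k d ≡ gcd k d [MOD d]`, so `s ≡ gcdA k d * c` works; `+ d` makes it positive.
    refine ⟨((k.gcdA d * c : ℤ) : ZMod d).val + d, by omega, ?_⟩
    rw [← ZMod.natCast_eq_natCast_iff]
    have hbez := congrArg (Int.cast : ℤ → ZMod d) (Nat.gcd_eq_gcd_ab k d)
    have hc' := congrArg (Int.cast : ℤ → ZMod d) hc
    push_cast [ZMod.natCast_zmod_val, ZMod.natCast_self] at hbez hc' ⊢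
    linear_combination -c * hbez - hc'

theorem ZMod.eq_one_or_eq_neg_one_of_sq_eq_one {p e : ℕ} (hp : p.Prime) (hodd : Odd p)
    {x : ZMod (p ^ e)} (hx : x ^ 2 = 1) : x = 1 ∨ x = -1 := by
  obtain ⟨c, rfl⟩ := ZMod.intCast_surjective x
  have hpi : Prime (p : ℤ) := Nat.prime_iff_prime_int.mp hp
  have hdvd : (p : ℤ) ^ e ∣ (c - 1) * (c + 1) := by
    have : (((c - 1) * (c + 1) : ℤ) : ZMod (p ^ e)) = 0 := by
      push_cast; linear_combination hx
    exact_mod_cast (ZMod.intCast_zmod_eq_zero_iff_dvd _ _).mp this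
  have hnot_both : ¬ ((p : ℤ) ∣ c - 1 ∧ (p : ℤ) ∣ c + 1) := by
    rintro ⟨h₁, h₂⟩
    have h2 : p ∣ 2 := by exact_mod_cast (by simpa using dvd_sub h₂ h₁ : (p : ℤ) ∣ 2)
    exact hodd.ne_two_of_dvd_nat dvd_rfl ((Nat.prime_dvd_prime_iff_eq hp Nat.prime_two).mp h2)
  have hzero : ∀ y : ℤ, (p : ℤ) ^ e ∣ y → (y : ZMod (p ^ e)) = 0 := fun y hy =>
    (ZMod.intCast_zmod_eq_zero_iff_dvd _ _).mpr (by exact_mod_cast hy)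
  rcases not_and_or.mp hnot_both with h | h
  · have := hzero _ (hpi.pow_dvd_of_dvd_mul_left e h hdvd)
    push_cast at this
    exact Or.inr (by linear_combination this)
  · have := hzero _ (hpi.pow_dvd_of_dvd_mul_right e h hdvd)
    push_cast at this
    exact Or.inl (by linear_combination this)

theorem ZMod.pow_prime_pow_eq_one_of_castHom_eq_one {p n : ℕ} {x : ZMod (p ^ (n + 1))}
    (hx : ZMod.castHom (dvd_pow_self p n.succ_ne_zero) (ZMod p) x = 1) : x ^ p ^ n = 1 := by
  obtain ⟨c, rfl⟩ := ZMod.intCast_surjective x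
  rw [map_intCast] at hx
  have h₁ : (p : ℤ) ∣ c - 1 := by
    rw [← ZMod.intCast_zmod_eq_zero_iff_dvd]; push_cast; rw [hx, sub_self]
  have h₂ := dvd_sub_pow_of_dvd_sub h₁ n
  rw [one_pow] at h₂
  have := (ZMod.intCast_zmod_eq_zero_iff_dvd _ (p ^ (n + 1))).mpr (by exact_mod_cast h₂)
  push_cast at this
  linear_combination this

theorem ZMod.even_orderOf_castHom_iff {p n : ℕ} (hodd : Odd p) (u : ZMod (p ^ (n + 1))) :
    Even (orderOf (ZMod.castHom (dvd_pow_self p n.succ_ne_zero) (ZMod p) u)) ↔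
      Even (orderOf u) := by
  refine Nat.even_iff_of_dvd_of_dvd_mul_odd (hodd.pow (n := n))
    (orderOf_map_dvd (ZMod.castHom _ (ZMod p)).toMonoidHom u) (orderOf_dvd_of_pow_eq_one ?_)
  rw [pow_mul]
  exact ZMod.pow_prime_pow_eq_one_of_castHom_eq_one (by rw [map_pow, pow_orderOf_eq_one])

theorem ZMod.castHom_inv {m n : ℕ} (h : m ∣ n) {x : ZMod n} (hx : IsUnit x) :
    ZMod.castHom h (ZMod m) x⁻¹ = (ZMod.castHom h (ZMod m) x)⁻¹ :=
  (ZMod.inv_eq_of_mul_eq_one _ _ _ (by rw [← map_mul, ZMod.mul_inv_of_unit _ hx, map_one])).symm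

theorem ZMod.intCast_dvd_pow_add_pow_iff {n : ℕ} (a b : ℤ) (hb : IsUnit (b : ZMod n)) (m : ℕ) :
    (n : ℤ) ∣ a ^ m + b ^ m ↔ ((a : ZMod n) * (b : ZMod n)⁻¹) ^ m = -1 := by
  obtain ⟨v, hv⟩ := hb
  rw [← ZMod.intCast_zmod_eq_zero_iff_dvd, Int.cast_add, Int.cast_pow, Int.cast_pow, ← hv,
    ZMod.inv_coe_unit, mul_pow, ← Units.val_pow_eq_pow_val v⁻¹, inv_pow,
    Units.mul_inv_eq_iff_eq_mul, Units.val_pow_eq_pow_val, neg_one_mul, eq_neg_iff_add_eq_zero]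

theorem stmt_3_general (a b : ℤ)
    (p : ℕ) (hp : p.Prime) (hodd : Odd p) (hpab : ¬ (p : ℤ) ∣ a * b)
    (e : ℕ) (he : 1 ≤ e) (k T : ℕ) :
    (∃ s : ℕ, 0 < s ∧ ((p : ℤ) ^ e) ∣ a ^ (k * s + T) + b ^ (k * s + T)) ↔
      Even (orderOf ((a : ZMod p) * (b : ZMod p)⁻¹)) ∧
        T ≡ orderOf ((a : ZMod (p ^ e)) * (b : ZMod (p ^ e))⁻¹) / 2
          [MOD Nat.gcd k (orderOf ((a : ZMod (p ^ e)) * (b : ZMod (p ^ e))⁻¹))] := by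
  obtain ⟨n, rfl⟩ : ∃ n, e = n + 1 := ⟨e - 1, by omega⟩
  have hpi : Prime (p : ℤ) := Nat.prime_iff_prime_int.mp hp
  have hunit (c : ℤ) (hc : ¬ (p : ℤ) ∣ c) : IsUnit (c : ZMod (p ^ (n + 1))) :=
    (ZMod.coe_int_isUnit_iff_isCoprime _ _).mpr <| by
      push_cast; exact (hpi.coprime_iff_not_dvd.mpr hc).pow_left
  have hub := hunit b fun h => hpab (h.mul_left a)
  set u := (a : ZMod (p ^ (n + 1))) * (b : ZMod (p ^ (n + 1)))⁻¹
  have hu : IsOfFinOrder u :=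
    ((hunit a fun h => hpab (h.mul_right b)).mul (ZMod.isUnit_inv hub)).isOfFinOrder
  have hmodp : ZMod.castHom (dvd_pow_self p n.succ_ne_zero) (ZMod p) u =
      (a : ZMod p) * (b : ZMod p)⁻¹ := by
    rw [map_mul, ZMod.castHom_inv _ hub, map_intCast, map_intCast]
  have hp2 : 2 < p := hp.two_le.lt_of_ne (hodd.ne_two_of_dvd_nat dvd_rfl).symm
  have : Fact (2 < p ^ (n + 1)) := ⟨hp2.trans_le (Nat.le_self_pow n.succ_ne_zero p)⟩
  have hdvd (m : ℕ) : (p : ℤ) ^ (n + 1) ∣ a ^ m + b ^ m ↔ u ^ m = -1 := by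
    exact_mod_cast ZMod.intCast_dvd_pow_add_pow_iff a b hub m
  simp_rw [hdvd, hu.pow_eq_neg_one_iff (fun _ => ZMod.eq_one_or_eq_neg_one_of_sq_eq_one hp hodd)
    ZMod.neg_one_ne_one, ← hmodp, ZMod.even_orderOf_castHom_iff hodd,
    ← Nat.exists_pos_mul_add_modEq_iff hu.orderOf_pos]
  tauto

/-- `p^e` is `(T,k)`-good w.r.t. `(a,b)` iff `ord_p(a·b⁻¹)` is even and
`T ≡ ord_{p^e}(a·b⁻¹)/2 (mod gcd(k, ord_{p^e}(a·b⁻¹)))`. -/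
theorem stmt_3 (a b : ℤ) (ha : a ≠ 0) (hb : b ≠ 0) (hab : IsCoprime a b)
    (p : ℕ) (hp : p.Prime) (hodd : Odd p) (hpab : ¬ (p : ℤ) ∣ a * b)
    (e : ℕ) (he : 1 ≤ e) (k T : ℕ) (hT : T < k) :
    (∃ s : ℕ, 0 < s ∧ ((p : ℤ) ^ e) ∣ a ^ (k * s + T) + b ^ (k * s + T)) ↔
      Even (orderOf ((a : ZMod p) * (b : ZMod p)⁻¹)) ∧
        T ≡ orderOf ((a : ZMod (p ^ e)) * (b : ZMod (p ^ e))⁻¹) / 2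
          [MOD Nat.gcd k (orderOf ((a : ZMod (p ^ e)) * (b : ZMod (p ^ e))⁻¹))] :=
  stmt_3_general a b p hp hodd hpab e he k T
end

section
/- Let p be an odd prime with p ∤ ab and e ≥ 1, and let 0 ≤ T < k. Then p^e is (T,k)-good with respect to (a,b) if and only if there exists a positive integer α such that: (1) ν₂(ord_p(a·b⁻¹)) = α; (2) T ≡ 2^(α−1) (mod 2^min(ν₂(k),α)); and (3) gcd(k/2^(ν₂(k)), ord_{p^e}(a·b⁻¹)/2^α) divides T. -/
/-!
Put `u = a b⁻¹` in `ZMod (p ^ e)` and `n = ord u`. Then `p ^ e ∣ a ^ m + b ^ m` iff `u ^ m = -1`;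
as `(ZMod (p ^ e))ˣ` is cyclic, `-1` is its only element of order two, so this happens iff `n` is
even and `m ≡ n / 2 (mod n)`. Since `x ≡ y (mod p)` implies `x ^ (p ^ (e - 1)) ≡ y ^ (p ^ (e - 1))
(mod p ^ e)`, `n` divides `ord_p(a b⁻¹) p ^ (e - 1)` and is a multiple of `ord_p(a b⁻¹)`, so both
orders have the same `2`-adic valuation `α`. Finally `k s + T ≡ n / 2 (mod n)` is solvable iff `gcd(k, n) ∣ n / 2 - T`, and
`gcd(k, n)` splits into the coprime factors `2 ^ min(ν₂ k, α)` and `gcd` of the odd parts.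
-/

namespace Nat

lemma odd_div_two_pow_padicValNat {n : ℕ} (hn : n ≠ 0) : Odd (n / 2 ^ padicValNat 2 n) := by
  rw [← coprime_two_left, prime_two.coprime_iff_not_dvd, ← factorization_def n prime_two]
  exact not_dvd_ordCompl prime_two hn

lemma two_pow_padicValNat_mul_div (n : ℕ) : 2 ^ padicValNat 2 n * (n / 2 ^ padicValNat 2 n) = n :=
  Nat.mul_div_cancel' pow_padicValNat_dvd

lemma gcd_two_pow_two_pow (β α : ℕ) : gcd (2 ^ β) (2 ^ α) = 2 ^ min β α := by
  rcases le_total β α with h | h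
  · rw [gcd_eq_left (pow_dvd_pow 2 h), min_eq_left h]
  · rw [gcd_eq_right (pow_dvd_pow 2 h), min_eq_right h]

lemma gcd_two_pow_mul_two_pow_mul {β α k n : ℕ} (hk : Odd k) (hn : Odd n) :
    gcd (2 ^ β * k) (2 ^ α * n) = 2 ^ min β α * gcd k n := by
  rw [Coprime.gcd_mul _ ((coprime_two_left.mpr hn).pow_left α),
    Coprime.gcd_mul_right_cancel _ ((coprime_two_left.mpr hk).pow_left α).symm,
    Coprime.gcd_mul_left_cancel _ ((coprime_two_left.mpr hn).pow_left β), gcd_two_pow_two_pow]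

lemma padicValNat_eq_of_dvd_of_dvd_mul {p m n q : ℕ} [Fact p.Prime] (hn : n ≠ 0) (hq : ¬ p ∣ q)
    (hmn : m ∣ n) (hnm : n ∣ m * q) : padicValNat p n = padicValNat p m := by
  have hm : m ≠ 0 := by rintro rfl; exact hn (zero_dvd_iff.mp hmn)
  have hq0 : q ≠ 0 := by rintro rfl; exact hq (dvd_zero p)
  apply le_antisymm
  · have := (padicValNat_dvd_iff_le (p := p) (mul_ne_zero hm hq0)).mp
      (pow_padicValNat_dvd.trans hnm)
    rwa [padicValNat.mul hm hq0, padicValNat.eq_zero_of_not_dvd hq, add_zero] at this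
  · exact (padicValNat_dvd_iff_le hn).mp (pow_padicValNat_dvd.trans hmn)

lemma exists_pos_mul_add_modEq_iff_s4 {k n : ℕ} (hn : n ≠ 0) (T c : ℕ) :
    (∃ s, 0 < s ∧ k * s + T ≡ c [MOD n]) ↔ T ≡ c [MOD k.gcd n] := by
  constructor
  · rintro ⟨s, -, hs⟩
    have hks : k * s ≡ 0 [MOD k.gcd n] := modEq_zero_iff_dvd.mpr ((gcd_dvd_left k n).mul_right s)
    simpa using (hks.add_right T).symm.trans (hs.of_dvd (gcd_dvd_right k n))
  · intro h
    obtain ⟨q, hq⟩ := modEq_iff_dvd.mp h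
    obtain ⟨s₀, hs₀⟩ : ∃ s₀ : ℤ, s₀ = k.gcdA n * q := ⟨_, rfl⟩
    have hmod : ((s₀ % n).toNat : ℤ) = s₀ % n :=
      Int.toNat_of_nonneg (Int.emod_nonneg _ (by exact_mod_cast hn))
    refine ⟨(s₀ % n).toNat + n, by omega, modEq_iff_dvd.mpr ⟨k.gcdB n * q + k * (s₀ / n) - k, ?_⟩⟩
    push_cast
    rw [hmod, Int.emod_def]
    linear_combination hq + q * gcd_eq_gcd_ab k n - k * hs₀

lemma modEq_half_mod_gcd_iff {β α k n : ℕ} (T : ℕ) (hk : Odd k) (hn : Odd n) (hα : α ≠ 0) :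
    T ≡ 2 ^ α * n / 2 [MOD gcd (2 ^ β * k) (2 ^ α * n)] ↔
      T ≡ 2 ^ (α - 1) [MOD 2 ^ min β α] ∧ gcd k n ∣ T := by
  have hcop : Coprime (2 ^ min β α) (gcd k n) :=
    ((coprime_two_left.mpr hn).pow_left _).coprime_dvd_right (gcd_dvd_right k n)
  obtain ⟨γ, rfl⟩ : ∃ γ, α = γ + 1 := ⟨α - 1, by omega⟩
  obtain ⟨j, rfl⟩ := hn
  have hhalf : 2 ^ (γ + 1) * (2 * j + 1) / 2 = 2 ^ γ * (2 * j + 1) := by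
    rw [pow_succ, mul_right_comm, Nat.mul_div_cancel _ two_pos]
  have hmod2 : 2 ^ γ * (2 * j + 1) ≡ 2 ^ γ [MOD 2 ^ min β (γ + 1)] := by
    refine ModEq.of_dvd (pow_dvd_pow 2 (min_le_right β _)) ?_
    rw [show 2 ^ γ * (2 * j + 1) = 2 ^ γ + 2 ^ (γ + 1) * j by ring]
    exact Nat.add_mul_mod_self_left _ _ _
  have hmodg : 2 ^ γ * (2 * j + 1) ≡ 0 [MOD gcd k (2 * j + 1)] :=
    modEq_zero_iff_dvd.mpr ((gcd_dvd_right _ _).mul_left _)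
  rw [gcd_two_pow_mul_two_pow_mul hk ⟨j, rfl⟩, hhalf, ← modEq_and_modEq_iff_modEq_mul hcop,
    add_tsub_cancel_right, ← modEq_zero_iff_dvd]
  exact and_congr ⟨fun h => h.trans hmod2, fun h => h.trans hmod2.symm⟩
    ⟨fun h => h.trans hmodg, fun h => h.trans hmodg.symm⟩

lemma exists_pos_mul_add_modEq_half_iff {k n : ℕ} (hk : k ≠ 0) (hn : n ≠ 0) (T : ℕ) :
    (∃ s, 0 < s ∧ 2 ∣ n ∧ k * s + T ≡ n / 2 [MOD n]) ↔
      ∃ α, 0 < α ∧ padicValNat 2 n = α ∧ T ≡ 2 ^ (α - 1) [MOD 2 ^ min (padicValNat 2 k) α] ∧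
        gcd (k / 2 ^ padicValNat 2 k) (n / 2 ^ α) ∣ T := by
  have key (hα : padicValNat 2 n ≠ 0) := modEq_half_mod_gcd_iff (β := padicValNat 2 k) T
    (odd_div_two_pow_padicValNat hk) (odd_div_two_pow_padicValNat hn) hα
  simp only [two_pow_padicValNat_mul_div] at key
  constructor
  · rintro ⟨s, hs, h2, hmod⟩
    have hα := (dvd_iff_padicValNat_ne_zero hn).mp h2
    exact ⟨_, pos_of_ne_zero hα, rfl,
      (key hα).mp ((exists_pos_mul_add_modEq_iff_s4 hn T _).mp ⟨s, hs, hmod⟩)⟩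
  · rintro ⟨α, hα, rfl, hmod⟩
    obtain ⟨s, hs, hmods⟩ := (exists_pos_mul_add_modEq_iff_s4 hn T _).mpr ((key hα.ne').mpr hmod)
    exact ⟨s, hs, (dvd_iff_padicValNat_ne_zero hn).mpr hα.ne', hmods⟩

end Nat

theorem IsCyclic.eq_one_or_eq_of_sq_eq_one {G : Type*} [Group G] [Finite G] [IsCyclic G]
    {x z : G} (hz : z ≠ 1) (hz2 : z ^ 2 = 1) (hx : x ^ 2 = 1) : x = 1 ∨ x = z := by
  classical
  have := Fintype.ofFinite G
  by_contra! h
  have hsub : ({1, z, x} : Finset G) ⊆ ({y | y ^ 2 = 1} : Finset G) := by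
    intro y
    simp only [Finset.mem_insert, Finset.mem_singleton, Finset.mem_filter, Finset.mem_univ,
      true_and]
    rintro (rfl | rfl | rfl) <;> simp [*]
  have := (Finset.card_le_card hsub).trans (IsCyclic.card_pow_eq_one_le two_pos)
  rw [Finset.card_insert_of_notMem (by simp [hz.symm, h.1.symm]), Finset.card_pair h.2.symm] at this
  omega

lemma ZMod.sq_eq_one_iff_of_prime_pow {p e : ℕ} [Fact (2 < p ^ e)] (hp : p.Prime) (hp2 : p ≠ 2)
    (x : ZMod (p ^ e)) : x ^ 2 = 1 ↔ x = 1 ∨ x = -1 := by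
  have : NeZero (p ^ e) := ⟨pow_ne_zero e hp.ne_zero⟩
  have : IsCyclic (ZMod (p ^ e))ˣ := ZMod.isCyclic_units_of_prime_pow p hp hp2 e
  refine ⟨fun hx => ?_, by rintro (rfl | rfl) <;> norm_num⟩
  lift x to (ZMod (p ^ e))ˣ using IsUnit.of_pow_eq_one hx two_ne_zero
  have hneg : (-1 : (ZMod (p ^ e))ˣ) ≠ 1 := fun h => ZMod.neg_one_ne_one (congrArg Units.val h)
  rcases IsCyclic.eq_one_or_eq_of_sq_eq_one hneg (by simp) (Units.ext (by simpa using hx))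
    with rfl | rfl <;> simp

lemma pow_eq_iff_modEq_orderOf_div_two {M : Type*} [Monoid M] {g z : M} (hg : IsOfFinOrder g)
    (hz : z ≠ 1) (hsq : ∀ x : M, x ^ 2 = 1 ↔ x = 1 ∨ x = z) (m : ℕ) :
    g ^ m = z ↔ 2 ∣ orderOf g ∧ m ≡ orderOf g / 2 [MOD orderOf g] := by
  have hn := hg.orderOf_pos
  by_cases h2 : 2 ∣ orderOf g
  · have hhalf : g ^ (orderOf g / 2) = z := by
      have hsq' : (g ^ (orderOf g / 2)) ^ 2 = 1 := by
        rw [← pow_mul, Nat.div_mul_cancel h2, pow_orderOf_eq_one]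
      refine ((hsq _).mp hsq').resolve_left (pow_ne_one_of_lt_orderOf ?_ ?_) <;> omega
    rw [← hhalf, hg.pow_eq_pow_iff_modEq, and_iff_right h2]
  · refine iff_of_false (fun hm => hz ?_) (fun h => h2 h.1)
    have hzn : orderOf z ∣ orderOf g := orderOf_dvd_of_pow_eq_one <| by
      rw [← hm, ← pow_mul, mul_comm, pow_mul, pow_orderOf_eq_one, one_pow]
    have hz2 : orderOf z ∣ 2 := orderOf_dvd_of_pow_eq_one ((hsq z).mpr (Or.inr rfl))
    have hcop : Nat.Coprime 2 (orderOf g) := (Nat.prime_two.coprime_iff_not_dvd).mpr h2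
    exact orderOf_eq_one_iff.mp (Nat.dvd_one.mp (hcop ▸ Nat.dvd_gcd hz2 hzn))

namespace ZMod

variable {N : ℕ} {a b : ℤ}

lemma mul_inv_pow_eq_intCast_iff (hb : IsUnit (b : ZMod N)) (c : ℤ) (m : ℕ) :
    ((a : ZMod N) * (b : ZMod N)⁻¹) ^ m = c ↔ (N : ℤ) ∣ a ^ m - c * b ^ m := by
  rw [← hb.unit_spec, inv_coe_unit, mul_pow, ← Units.val_pow_eq_pow_val, inv_pow,
    Units.mul_inv_eq_iff_eq_mul, Units.val_pow_eq_pow_val, hb.unit_spec, dvd_sub_comm,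
    ← intCast_eq_intCast_iff_dvd_sub]
  push_cast
  rfl

lemma orderOf_mul_inv_dvd_iff (hb : IsUnit (b : ZMod N)) (m : ℕ) :
    orderOf ((a : ZMod N) * (b : ZMod N)⁻¹) ∣ m ↔ (N : ℤ) ∣ a ^ m - b ^ m := by
  rw [orderOf_dvd_iff_pow_eq_one]
  simpa using mul_inv_pow_eq_intCast_iff (a := a) hb 1 m

end ZMod

section PrimePower

variable {p e : ℕ} {a b : ℤ}

lemma orderOf_mul_inv_ne_zero [Fact p.Prime] (ha : ¬ (p : ℤ) ∣ a) (hb : IsUnit (b : ZMod p)) :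
    orderOf ((a : ZMod p) * (b : ZMod p)⁻¹) ≠ 0 := by
  refine orderOf_eq_zero_iff_eq_zero.not.mpr (mul_ne_zero ?_ (inv_ne_zero hb.ne_zero))
  rwa [Ne, ZMod.intCast_zmod_eq_zero_iff_dvd]

lemma orderOf_mul_inv_dvd_orderOf_mul_inv_prime_pow (he : e ≠ 0) (hb : IsUnit (b : ZMod p))
    (hbₑ : IsUnit (b : ZMod (p ^ e))) :
    orderOf ((a : ZMod p) * (b : ZMod p)⁻¹) ∣
      orderOf ((a : ZMod (p ^ e)) * (b : ZMod (p ^ e))⁻¹) := by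
  rw [ZMod.orderOf_mul_inv_dvd_iff hb]
  refine (dvd_pow_self (p : ℤ) he).trans ?_
  simpa using (ZMod.orderOf_mul_inv_dvd_iff hbₑ _).mp dvd_rfl

lemma orderOf_mul_inv_prime_pow_dvd (he : 1 ≤ e) (hb : IsUnit (b : ZMod p))
    (hbₑ : IsUnit (b : ZMod (p ^ e))) :
    orderOf ((a : ZMod (p ^ e)) * (b : ZMod (p ^ e))⁻¹) ∣
      orderOf ((a : ZMod p) * (b : ZMod p)⁻¹) * p ^ (e - 1) := by
  rw [ZMod.orderOf_mul_inv_dvd_iff hbₑ, pow_mul, pow_mul]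
  simpa [Nat.sub_add_cancel he] using
    dvd_sub_pow_of_dvd_sub ((ZMod.orderOf_mul_inv_dvd_iff hb _).mp dvd_rfl) (e - 1)

lemma prime_pow_dvd_add_pow_iff [Fact (2 < p ^ e)] (hp : p.Prime) (hp2 : p ≠ 2)
    (hb : IsUnit (b : ZMod (p ^ e)))
    (hn : orderOf ((a : ZMod (p ^ e)) * (b : ZMod (p ^ e))⁻¹) ≠ 0) (m : ℕ) :
    (p : ℤ) ^ e ∣ a ^ m + b ^ m ↔
      2 ∣ orderOf ((a : ZMod (p ^ e)) * (b : ZMod (p ^ e))⁻¹) ∧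
        m ≡ orderOf ((a : ZMod (p ^ e)) * (b : ZMod (p ^ e))⁻¹) / 2
          [MOD orderOf ((a : ZMod (p ^ e)) * (b : ZMod (p ^ e))⁻¹)] := by
  rw [← pow_eq_iff_modEq_orderOf_div_two (orderOf_pos_iff.mp (Nat.pos_of_ne_zero hn))
    ZMod.neg_one_ne_one (ZMod.sq_eq_one_iff_of_prime_pow hp hp2), ← Int.cast_one, ← Int.cast_neg,
    ZMod.mul_inv_pow_eq_intCast_iff hb]
  push_cast
  rw [neg_one_mul, sub_neg_eq_add]

end PrimePower

theorem stmt_4_general (a b : ℤ)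
    (p : ℕ) (hp : p.Prime) (hodd : Odd p) (hpab : ¬ (p : ℤ) ∣ a * b)
    (e : ℕ) (he : 1 ≤ e) (k T : ℕ) (hT : T < k) :
    (∃ s : ℕ, 0 < s ∧ ((p : ℤ) ^ e) ∣ a ^ (k * s + T) + b ^ (k * s + T)) ↔
      ∃ α : ℕ, 0 < α ∧
        padicValNat 2 (orderOf ((a : ZMod p) * (b : ZMod p)⁻¹)) = α ∧
        T ≡ 2 ^ (α - 1) [MOD 2 ^ (min (padicValNat 2 k) α)] ∧
        Nat.gcd (k / 2 ^ (padicValNat 2 k))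
          (orderOf ((a : ZMod (p ^ e)) * (b : ZMod (p ^ e))⁻¹) / 2 ^ α) ∣ T := by
  have : Fact p.Prime := ⟨hp⟩
  have hp2 : p ≠ 2 := hodd.ne_two_of_dvd_nat dvd_rfl
  have : Fact (2 < p ^ e) := ⟨(hp.two_le.lt_of_ne' hp2).trans_le (Nat.le_self_pow (by omega) p)⟩
  have hbp : IsCoprime (p : ℤ) b :=
    (Nat.prime_iff_prime_int.mp hp).coprime_iff_not_dvd.mpr fun h => hpab (h.mul_left a)
  have hb : IsUnit (b : ZMod p) := (ZMod.coe_int_isUnit_iff_isCoprime b p).mpr hbp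
  have hbₑ : IsUnit (b : ZMod (p ^ e)) :=
    (ZMod.coe_int_isUnit_iff_isCoprime b _).mpr (by push_cast; exact hbp.pow_left)
  have hn₁ := orderOf_mul_inv_ne_zero (fun h => hpab (h.mul_right b)) hb
  have hnn₁ := orderOf_mul_inv_prime_pow_dvd (a := a) he hb hbₑ
  have hn := ne_zero_of_dvd_ne_zero (mul_ne_zero hn₁ (pow_ne_zero _ hp.ne_zero)) hnn₁
  rw [← Nat.padicValNat_eq_of_dvd_of_dvd_mul hn hodd.pow.not_two_dvd_nat
    (orderOf_mul_inv_dvd_orderOf_mul_inv_prime_pow (by omega) hb hbₑ) hnn₁]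
  simp only [prime_pow_dvd_add_pow_iff hp hp2 hbₑ hn]
  exact Nat.exists_pos_mul_add_modEq_half_iff (by omega) hn T

/-- `p^e` is `(T,k)`-good w.r.t. `(a,b)` iff there is a positive `α`
with (1) `ν₂(ord_p(a·b⁻¹)) = α`; (2) `T ≡ 2^(α-1) (mod 2^min(ν₂(k),α))`; and
(3) `gcd(k/2^(ν₂(k)), ord_{p^e}(a·b⁻¹)/2^α) ∣ T`. -/
theorem stmt_4 (a b : ℤ) (ha : a ≠ 0) (hb : b ≠ 0) (hab : IsCoprime a b)
    (p : ℕ) (hp : p.Prime) (hodd : Odd p) (hpab : ¬ (p : ℤ) ∣ a * b)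
    (e : ℕ) (he : 1 ≤ e) (k T : ℕ) (hT : T < k) :
    (∃ s : ℕ, 0 < s ∧ ((p : ℤ) ^ e) ∣ a ^ (k * s + T) + b ^ (k * s + T)) ↔
      ∃ α : ℕ, 0 < α ∧
        padicValNat 2 (orderOf ((a : ZMod p) * (b : ZMod p)⁻¹)) = α ∧
        T ≡ 2 ^ (α - 1) [MOD 2 ^ (min (padicValNat 2 k) α)] ∧
        Nat.gcd (k / 2 ^ (padicValNat 2 k))
          (orderOf ((a : ZMod (p ^ e)) * (b : ZMod (p ^ e))⁻¹) / 2 ^ α) ∣ T :=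
  stmt_4_general a b p hp hodd hpab e he k T hT
end

section
/- Let d be an odd integer with gcd(d,ab)=1, with prime factorization d = ∏ p_i^{e_i}. If there exists an integer N such that N ≡ ord_{p_j^{e_j}}(a·b⁻¹)/2 (mod ord_{p_j^{e_j}}(a·b⁻¹)) for all j (in particular each such order is even), then ν₂(ord_{p_i}(a·b⁻¹)) is the same for all primes p_i dividing d. -/
/-!
Write `x = a·b⁻¹`. Reduction `(ℤ/p^e)ˣ → (ℤ/p)ˣ` has kernel of order `p^(e-1)`, which is odd,
so `ν₂(ord_p x) = ν₂(ord_{p^e} x)`. If `n = ord_{p^e} x = 2m` and `N ≡ m (mod 2m)`, then `N` is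
`m` times an odd number, so `ν₂(ord_{p^e} x) = ν₂(N) + 1`, which does not depend on `p`.
-/

theorem padicValNat_orderOf_map_of_not_dvd_card_ker {G H : Type*} [Group G] [Group H]
    (f : G →* H) {ℓ : ℕ} [Fact ℓ.Prime] (hker : ¬ ℓ ∣ Nat.card f.ker) {g : G}
    (hg : IsOfFinOrder g) :
    padicValNat ℓ (orderOf (f g)) = padicValNat ℓ (orderOf g) := by
  set m := orderOf (f g)
  have hm_dvd : m ∣ orderOf g := orderOf_map_dvd f g
  have hm_pos : 0 < m := Nat.pos_of_dvd_of_pos hm_dvd hg.orderOf_pos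
  obtain ⟨r, hr⟩ := hm_dvd
  have hr_pos : 0 < r := Nat.pos_of_mul_pos_left (hr ▸ hg.orderOf_pos)
  have hpow_mem : g ^ m ∈ f.ker := by rw [MonoidHom.mem_ker, map_pow, pow_orderOf_eq_one]
  have hr_dvd : r ∣ Nat.card f.ker := by
    have : orderOf (g ^ m) = r := by
      rw [orderOf_pow_of_dvd hm_pos.ne' ⟨r, hr⟩, hr, Nat.mul_div_cancel_left _ hm_pos]
    rw [← this, ← Subgroup.orderOf_mk (g ^ m) hpow_mem]
    exact orderOf_dvd_natCard _
  rw [hr, padicValNat.mul hm_pos.ne' hr_pos.ne',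
    padicValNat.eq_zero_of_not_dvd fun h ↦ hker (h.trans hr_dvd), add_zero]

theorem IsCoprime.natCast_pow_right {c : ℤ} {p : ℕ} (h : IsCoprime c p) (e : ℕ) :
    IsCoprime c ((p ^ e : ℕ) : ℤ) := by
  rw [Nat.cast_pow]
  exact h.pow_right

namespace ZMod

theorem card_ker_unitsMap_prime_pow {p e : ℕ} (hp : p.Prime) (he : e ≠ 0) :
    Nat.card (unitsMap (dvd_pow_self p he)).ker = p ^ (e - 1) := by
  have : NeZero (p ^ e) := ⟨pow_ne_zero e hp.ne_zero⟩
  have : Fact p.Prime := ⟨hp⟩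
  have hcard := Subgroup.card_eq_card_quotient_mul_card_subgroup (unitsMap (dvd_pow_self p he)).ker
  rw [Nat.card_congr (QuotientGroup.quotientKerEquivOfSurjective _
    (unitsMap_surjective _)).toEquiv, Nat.card_eq_fintype_card (α := (ZMod (p ^ e))ˣ),
    Nat.card_eq_fintype_card (α := (ZMod p)ˣ), card_units_eq_totient, card_units_eq_totient,
    Nat.totient_prime_pow hp (Nat.pos_of_ne_zero he), Nat.totient_prime hp, mul_comm] at hcard
  exact (Nat.eq_of_mul_eq_mul_left (Nat.sub_pos_of_lt hp.one_lt) hcard).symm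

theorem unitsMap_unitOfIsCoprime {m n : ℕ} (hnm : n ∣ m) (a : ℤ) (ha : IsCoprime a m) :
    unitsMap hnm (unitOfIsCoprime a ha) =
      unitOfIsCoprime a (ha.of_isCoprime_of_dvd_right (Int.natCast_dvd_natCast.mpr hnm)) :=
  Units.ext (cast_intCast hnm a)

theorem coe_unitOfIsCoprime_mul_inv {m : ℕ} {a b : ℤ} (ha : IsCoprime a m) (hb : IsCoprime b m) :
    ((unitOfIsCoprime a ha * (unitOfIsCoprime b hb)⁻¹ : (ZMod m)ˣ) : ZMod m) =
      a * (b : ZMod m)⁻¹ := by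
  rw [Units.val_mul, ← inv_coe_unit, coe_unitOfIsCoprime, coe_unitOfIsCoprime]

theorem orderOf_intCast_mul_inv_pos {m : ℕ} {a b : ℤ} (ha : IsCoprime a m) (hb : IsCoprime b m) :
    0 < orderOf ((a : ZMod m) * (b : ZMod m)⁻¹) := by
  rw [← coe_unitOfIsCoprime_mul_inv ha hb, orderOf_units]
  exact orderOf_pos _

theorem padicValNat_orderOf_intCast_mul_inv_prime_pow {ℓ p e : ℕ} [Fact ℓ.Prime] (hp : p.Prime)
    (hℓp : ℓ ≠ p) (he : e ≠ 0) {a b : ℤ} (ha : IsCoprime a p) (hb : IsCoprime b p) :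
    padicValNat ℓ (orderOf ((a : ZMod (p ^ e)) * (b : ZMod (p ^ e))⁻¹)) =
      padicValNat ℓ (orderOf ((a : ZMod p) * (b : ZMod p)⁻¹)) := by
  have hker : ¬ ℓ ∣ Nat.card (unitsMap (dvd_pow_self p he)).ker := by
    rw [card_ker_unitsMap_prime_pow hp he]
    exact fun h ↦ hℓp ((Nat.prime_dvd_prime_iff_eq Fact.out hp).mp
      (Nat.Prime.dvd_of_dvd_pow Fact.out h))
  rw [← coe_unitOfIsCoprime_mul_inv (ha.natCast_pow_right e) (hb.natCast_pow_right e),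
    ← coe_unitOfIsCoprime_mul_inv ha hb, orderOf_units, orderOf_units,
    ← padicValNat_orderOf_map_of_not_dvd_card_ker _ hker (isOfFinOrder_of_finite _), map_mul,
    map_inv, unitsMap_unitOfIsCoprime, unitsMap_unitOfIsCoprime]

end ZMod

theorem padicValNat_two_eq_padicValInt_add_one_of_modEq_half {n : ℕ} (hn : 0 < n) (heven : Even n)
    {N : ℤ} (hN : N ≡ ((n / 2 : ℕ) : ℤ) [ZMOD n]) :
    padicValNat 2 n = padicValInt 2 N + 1 := by
  obtain ⟨m, rfl⟩ := heven
  have hm : m ≠ 0 := by omega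
  rw [show (m + m) / 2 = m by omega] at hN
  obtain ⟨k, hk⟩ := hN.dvd
  have hNm : N = m * (1 - 2 * k) := by push_cast at hk; linear_combination -hk
  have hodd : ¬ (2 : ℤ) ∣ 1 - 2 * k := by omega
  rw [hNm, padicValInt.mul (by exact_mod_cast hm) (by omega), padicValInt.of_nat,
    padicValInt.eq_zero_of_not_dvd hodd, ← two_mul, padicValNat.mul two_ne_zero hm,
    padicValNat_self, add_zero, add_comm]

theorem padicValNat_two_orderOf_eq_of_modEq_half (a b : ℤ) {d : ℕ} (hd : Odd d)
    (hdab : IsCoprime (d : ℤ) (a * b)) (N : ℤ) {p : ℕ} (hp : p ∈ d.primeFactors)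
    (hNp : Even (orderOf ((a : ZMod (p ^ (d.factorization p))) *
          (b : ZMod (p ^ (d.factorization p)))⁻¹)) ∧
      Int.ModEq
        ((orderOf ((a : ZMod (p ^ (d.factorization p))) *
            (b : ZMod (p ^ (d.factorization p)))⁻¹) : ℤ))
        N
        (((orderOf ((a : ZMod (p ^ (d.factorization p))) *
            (b : ZMod (p ^ (d.factorization p)))⁻¹) / 2 : ℕ) : ℤ))) :
    padicValNat 2 (orderOf ((a : ZMod p) * (b : ZMod p)⁻¹)) = padicValInt 2 N + 1 := by
  have hpp := Nat.prime_of_mem_primeFactors hp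
  have hpd := Nat.dvd_of_mem_primeFactors hp
  have hp2 : 2 ≠ p := by
    rintro rfl
    exact (Nat.not_even_iff_odd.mpr hd) (even_iff_two_dvd.mpr hpd)
  have he : d.factorization p ≠ 0 :=
    Finsupp.mem_support_iff.mp (by rwa [Nat.support_factorization])
  have hcop : IsCoprime (a * b) p :=
    (hdab.of_isCoprime_of_dvd_left (Int.natCast_dvd_natCast.mpr hpd)).symm
  have ha : IsCoprime a p := hcop.of_mul_left_left
  have hb : IsCoprime b p := hcop.of_mul_left_right
  rw [← ZMod.padicValNat_orderOf_intCast_mul_inv_prime_pow hpp hp2 he ha hb]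
  exact padicValNat_two_eq_padicValInt_add_one_of_modEq_half
    (ZMod.orderOf_intCast_mul_inv_pos (ha.natCast_pow_right _) (hb.natCast_pow_right _))
    hNp.1 hNp.2

theorem stmt_5_general (a b : ℤ)
    (d : ℕ) (hd : Odd d) (hdab : IsCoprime (d : ℤ) (a * b))
    (N : ℤ)
    (hN : ∀ p ∈ d.primeFactors,
      Even (orderOf ((a : ZMod (p ^ (d.factorization p))) *
          (b : ZMod (p ^ (d.factorization p)))⁻¹)) ∧
      Int.ModEq
        ((orderOf ((a : ZMod (p ^ (d.factorization p))) *
            (b : ZMod (p ^ (d.factorization p)))⁻¹) : ℤ))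
        N
        (((orderOf ((a : ZMod (p ^ (d.factorization p))) *
            (b : ZMod (p ^ (d.factorization p)))⁻¹) / 2 : ℕ) : ℤ))) :
    ∀ p ∈ d.primeFactors, ∀ q ∈ d.primeFactors,
      padicValNat 2 (orderOf ((a : ZMod p) * (b : ZMod p)⁻¹)) =
        padicValNat 2 (orderOf ((a : ZMod q) * (b : ZMod q)⁻¹)) := fun p hp q hq ↦ by
  rw [padicValNat_two_orderOf_eq_of_modEq_half a b hd hdab N hp (hN p hp),
    padicValNat_two_orderOf_eq_of_modEq_half a b hd hdab N hq (hN q hq)]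

/-- if for an odd `d` coprime to `ab` there is an integer `N` with
`N ≡ ord_{p^e}(a·b⁻¹)/2 (mod ord_{p^e}(a·b⁻¹))` for every maximal prime power
`p^e ∥ d` (each such order being even), then `ν₂(ord_p(a·b⁻¹))` is the same for
all primes `p ∣ d`. -/
theorem stmt_5 (a b : ℤ) (ha : a ≠ 0) (hb : b ≠ 0) (hab : IsCoprime a b)
    (d : ℕ) (hd : Odd d) (hdab : IsCoprime (d : ℤ) (a * b))
    (N : ℤ)
    (hN : ∀ p ∈ d.primeFactors,
      Even (orderOf ((a : ZMod (p ^ (d.factorization p))) *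
          (b : ZMod (p ^ (d.factorization p)))⁻¹)) ∧
      Int.ModEq
        ((orderOf ((a : ZMod (p ^ (d.factorization p))) *
            (b : ZMod (p ^ (d.factorization p)))⁻¹) : ℤ))
        N
        (((orderOf ((a : ZMod (p ^ (d.factorization p))) *
            (b : ZMod (p ^ (d.factorization p)))⁻¹) / 2 : ℕ) : ℤ))) :
    ∀ p ∈ d.primeFactors, ∀ q ∈ d.primeFactors,
      padicValNat 2 (orderOf ((a : ZMod p) * (b : ZMod p)⁻¹)) =
        padicValNat 2 (orderOf ((a : ZMod q) * (b : ZMod q)⁻¹)) :=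
  stmt_5_general a b d hd hdab N hN
end

section
/- Let a and b be odd coprime nonzero integers with a + b ≠ 0, let 0 ≤ T < k, and let ε ≥ 2 be an integer. Then 2^ε is (T,k)-good with respect to (a,b) if and only if ε ≤ ν₂(a+b) and there exists a positive integer s such that ks + T is odd. -/
/-- For odd `a, b` and odd `n`, `2^ε ∣ a^n + b^n ↔ 2^ε ∣ a + b`. -/
lemma aux_odd_pow_dvd (a b : ℤ) (haodd : Odd a) (hbodd : Odd b)
    (n : ℕ) (hn : Odd n) (ε : ℕ) :
    ((2 : ℤ) ^ ε) ∣ a ^ n + b ^ n ↔ ((2 : ℤ) ^ ε) ∣ a + b := by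
  have hfac : (∑ i ∈ Finset.range n, a ^ i * (-b) ^ (n - 1 - i)) * (a + b)
      = a ^ n + b ^ n := by
    have := geom_sum₂_mul a (-b) n
    rw [hn.neg_pow] at this
    linarith [this]
  set c : ℤ := ∑ i ∈ Finset.range n, a ^ i * (-b) ^ (n - 1 - i) with hc
  have hcodd : Odd c := by
    have ha2 : ((a : ZMod 2)) = 1 := by
      obtain ⟨m, hm⟩ := haodd
      rw [hm]; push_cast
      rw [show ((2:ZMod 2)) = 0 from rfl]; ring
    have hb2 : ((b : ZMod 2)) = 1 := by
      obtain ⟨l, hl⟩ := hbodd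
      rw [hl]; push_cast
      rw [show ((2:ZMod 2)) = 0 from rfl]; ring
    have hcast : (c : ZMod 2) = 1 := by
      rw [hc]
      push_cast
      rw [ha2, hb2]
      simp [show (-(1:ZMod 2)) = 1 from rfl]
      obtain ⟨t, ht⟩ := hn
      rw [ht]; push_cast
      rw [show ((2:ZMod 2)) = 0 from rfl]; ring
    rw [Int.odd_iff]
    by_contra h
    have h2 : ((2:ℕ):ℤ) ∣ c := by push_cast; exact Int.dvd_of_emod_eq_zero (by omega)
    have h0 := (ZMod.intCast_zmod_eq_zero_iff_dvd c 2).mpr h2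
    rw [hcast] at h0
    exact one_ne_zero h0
  constructor
  · intro h
    have hcop : IsCoprime ((2 : ℤ) ^ ε) c := by
      apply IsCoprime.pow_left
      rw [Int.isCoprime_iff_gcd_eq_one]
      exact Nat.coprime_two_left.mpr (Int.natAbs_odd.mpr hcodd)
    exact hcop.dvd_of_dvd_mul_left (by rw [← hfac] at h; exact h)
  · intro h
    exact hfac ▸ Dvd.dvd.mul_left h c

/-- for odd coprime nonzero `a, b` with `a + b ≠ 0`, `0 ≤ T < k` and
`ε ≥ 2`, `2^ε` is `(T,k)`-good w.r.t. `(a,b)` iff `ε ≤ ν₂(a+b)` and there is a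
positive `s` with `k*s + T` odd. -/
theorem stmt_8 (a b : ℤ) (ha : a ≠ 0) (hb : b ≠ 0) (hab : IsCoprime a b)
    (haodd : Odd a) (hbodd : Odd b) (hsum : a + b ≠ 0)
    (k T : ℕ) (hT : T < k) (ε : ℕ) (hε : 2 ≤ ε) :
    (∃ s : ℕ, 0 < s ∧ ((2 : ℤ) ^ ε) ∣ a ^ (k * s + T) + b ^ (k * s + T)) ↔
      ε ≤ padicValInt 2 (a + b) ∧ ∃ s : ℕ, 0 < s ∧ Odd (k * s + T) := by
  have hdvd_iff : ∀ m : ℕ, ((2:ℤ)^m ∣ a + b) ↔ m ≤ padicValInt 2 (a + b) := by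
    intro m
    have := padicValInt_dvd_iff (p := 2) m (a + b)
    push_cast at this
    rw [this]
    simp [hsum]
  constructor
  · rintro ⟨s, hs, hdvd⟩
    set n := k * s + T with hn
    have hnodd : Odd n := by
      by_contra hne
      rw [Nat.not_odd_iff_even] at hne
      obtain ⟨m, hm⟩ := hne
      have h4 : (4 : ℤ) ∣ a ^ n + b ^ n := by
        calc (4:ℤ) = 2^2 := by norm_num
        _ ∣ 2^ε := pow_dvd_pow 2 hε
        _ ∣ _ := hdvd
      have : ((a : ZMod 4) ^ n + (b : ZMod 4) ^ n) = 0 := by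
        have := (ZMod.intCast_zmod_eq_zero_iff_dvd (a ^ n + b ^ n) 4).mpr h4
        push_cast at this
        exact this
      have hsq : ∀ x : ℤ, Odd x → ((x : ZMod 4))^2 = 1 := by
        intro x hx
        rw [Int.odd_iff] at hx
        have : ((x : ZMod 4)) = ((x % 4 : ℤ) : ZMod 4) := by
          exact_mod_cast (ZMod.intCast_mod x 4).symm
        rw [this]
        have h4x : x % 4 = 1 ∨ x % 4 = 3 := by omega
        rcases h4x with h | h <;> rw [h] <;> decide
      rw [hm, show m + m = 2 * m by ring, pow_mul, pow_mul, hsq a haodd, hsq b hbodd] at this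
      rw [one_pow] at this
      exact absurd this (by decide)
    refine ⟨(hdvd_iff ε).mp ((aux_odd_pow_dvd a b haodd hbodd n hnodd ε).mp hdvd), s, hs, hnodd⟩
  · rintro ⟨hle, s, hs, hodd⟩
    exact ⟨s, hs, (aux_odd_pow_dvd a b haodd hbodd _ hodd ε).mpr ((hdvd_iff ε).mpr hle)⟩
end

section
/- Let a, b be odd coprime nonzero integers with a + b ≠ 0, let d₀ be an odd positive integer, let 0 ≤ T < k, and let ε ≥ 2. Then 2^ε·d₀ is (T,k)-good with respect to (a,b) if and only if ε ≤ ν₂(a+b) and there exists a positive integer s such that d₀ divides a^(ks+T)+b^(ks+T) and ks+T is odd. -/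
/-!
Modulo `4` the square of an odd integer is `1`, so `a ^ n + b ^ n ≡ 2 [ZMOD 4]` for odd `a, b`
and even `n`: divisibility by `2 ^ ε` with `ε ≥ 2` forces `n` to be odd. For odd `n` the
cofactor `(a ^ n + b ^ n) / (a + b)` is a sum of `n` odd terms, hence odd, so `a ^ n + b ^ n`
and `a + b` have the same `2`-adic valuation. The odd part `d₀` is coprime to `2 ^ ε` and
splits off.
-/

theorem IsCoprime.mul_dvd_iff {R : Type*} [CommSemiring R] {x y z : R} (h : IsCoprime x y) :
    x * y ∣ z ↔ x ∣ z ∧ y ∣ z :=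
  ⟨fun hz => ⟨dvd_of_mul_right_dvd hz, dvd_of_mul_left_dvd hz⟩, fun hz => h.mul_dvd hz.1 hz.2⟩

theorem emultiplicity_pow_add_pow_of_prime {R : Type*} [CommRing R] [IsDomain R] {p : R}
    (hp : Prime p) {x y : R} (hxy : p ∣ x + y) (hx : ¬p ∣ x) {n : ℕ} (hn : Odd n)
    (hpn : ¬p ∣ n) : emultiplicity p (x ^ n + y ^ n) = emultiplicity p (x + y) := by
  rw [← sub_neg_eq_add] at hxy
  rw [← sub_neg_eq_add, ← sub_neg_eq_add, ← hn.neg_pow]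
  exact emultiplicity_pow_sub_pow_of_prime hp hxy hx hpn

namespace Int

theorem not_four_dvd_sq_add_sq {x y : ℤ} (hx : Odd x) (hy : Odd y) : ¬4 ∣ x ^ 2 + y ^ 2 := by
  rw [Int.dvd_iff_emod_eq_zero, Int.add_emod, sq_mod_four_eq_one_of_odd hx,
    sq_mod_four_eq_one_of_odd hy]
  decide

theorem emultiplicity_two_pow_add_pow {a b : ℤ} (ha : Odd a) (hb : Odd b) {n : ℕ}
    (hn : Odd n) : emultiplicity 2 (a ^ n + b ^ n) = emultiplicity 2 (a + b) := by
  refine emultiplicity_pow_add_pow_of_prime prime_two ?_ ?_ hn ?_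
  · exact even_iff_two_dvd.mp (ha.add_odd hb)
  · simpa [← even_iff_two_dvd] using ha
  · exact_mod_cast hn.not_two_dvd_nat

theorem two_pow_dvd_pow_add_pow_iff {a b : ℤ} (ha : Odd a) (hb : Odd b) {ε : ℕ} (hε : 2 ≤ ε)
    (n : ℕ) : 2 ^ ε ∣ a ^ n + b ^ n ↔ Odd n ∧ 2 ^ ε ∣ a + b := by
  rcases n.even_or_odd with ⟨m, rfl⟩ | hn
  · have h4 : (4 : ℤ) ∣ 2 ^ ε := by simpa using pow_dvd_pow (2 : ℤ) hε
    refine iff_of_false (fun h => not_four_dvd_sq_add_sq (ha.pow (n := m)) (hb.pow (n := m)) ?_) (by simp)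
    simpa [← two_mul, pow_mul'] using h4.trans h
  · simp only [hn, true_and, pow_dvd_iff_le_emultiplicity, emultiplicity_two_pow_add_pow ha hb hn]

end Int

theorem stmt_10_general (a b : ℤ)
    (haodd : Odd a) (hbodd : Odd b) (hsum : a + b ≠ 0)
    (d₀ : ℕ) (hd₀odd : Odd d₀)
    (k T : ℕ) (ε : ℕ) (hε : 2 ≤ ε) :
    (∃ s : ℕ, 0 < s ∧ ((2 ^ ε * d₀ : ℕ) : ℤ) ∣ a ^ (k * s + T) + b ^ (k * s + T)) ↔
      ε ≤ padicValInt 2 (a + b) ∧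
        ∃ s : ℕ, 0 < s ∧ (d₀ : ℤ) ∣ a ^ (k * s + T) + b ^ (k * s + T) ∧
          Odd (k * s + T) := by
  have hcop : IsCoprime ((2 : ℤ) ^ ε) d₀ := by
    exact_mod_cast (Nat.coprime_two_left.mpr hd₀odd).pow_left ε |>.isCoprime
  have hval : (2 : ℤ) ^ ε ∣ a + b ↔ ε ≤ padicValInt 2 (a + b) := by
    simpa [hsum] using padicValInt_dvd_iff (p := 2) ε (a + b)
  simp only [Nat.cast_mul, Nat.cast_pow, Nat.cast_ofNat, hcop.mul_dvd_iff,
    Int.two_pow_dvd_pow_add_pow_iff haodd hbodd hε, ← hval]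
  constructor
  · rintro ⟨s, hs, ⟨hodd, h2⟩, hd⟩
    exact ⟨h2, s, hs, hd, hodd⟩
  · rintro ⟨h2, s, hs, hd, hodd⟩
    exact ⟨s, hs, ⟨hodd, h2⟩, hd⟩

/-- for odd coprime nonzero `a, b` with `a + b ≠ 0`, odd positive `d₀`,
`0 ≤ T < k` and `ε ≥ 2`, `2^ε·d₀` is `(T,k)`-good w.r.t. `(a,b)` iff
`ε ≤ ν₂(a+b)` and there exists a positive `s` with `d₀ ∣ a^(ks+T)+b^(ks+T)` and
`ks+T` odd. -/
theorem stmt_10 (a b : ℤ) (ha : a ≠ 0) (hb : b ≠ 0) (hab : IsCoprime a b)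
    (haodd : Odd a) (hbodd : Odd b) (hsum : a + b ≠ 0)
    (d₀ : ℕ) (hd₀ : 0 < d₀) (hd₀odd : Odd d₀)
    (k T : ℕ) (hT : T < k) (ε : ℕ) (hε : 2 ≤ ε) :
    (∃ s : ℕ, 0 < s ∧ ((2 ^ ε * d₀ : ℕ) : ℤ) ∣ a ^ (k * s + T) + b ^ (k * s + T)) ↔
      ε ≤ padicValInt 2 (a + b) ∧
        ∃ s : ℕ, 0 < s ∧ (d₀ : ℤ) ∣ a ^ (k * s + T) + b ^ (k * s + T) ∧
          Odd (k * s + T) :=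
  stmt_10_general a b haodd hbodd hsum d₀ hd₀odd k T ε hε
end

section
/- Let 0 ≤ T < k and let d > 1 be an odd integer with gcd(d, ab) = 1. Then d is (T,k)-good with respect to (a,b) if and only if d is (i,k)-good with respect to (a,b) for every i in C_k(T) = {(2j+1)T mod k : j ≥ 0}. -/
/-- an odd `d > 1` coprime to `ab` is `(T,k)`-good w.r.t. `(a,b)` iff
it is `(i,k)`-good for every `i = (2j+1)T mod k` in `C_k(T)`. -/
theorem stmt_13 (a b : ℤ) (ha : a ≠ 0) (hb : b ≠ 0) (hab : IsCoprime a b)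
    (k T : ℕ) (hT : T < k)
    (d : ℕ) (hd1 : 1 < d) (hd : Odd d) (hdab : IsCoprime (d : ℤ) (a * b)) :
    (∃ s : ℕ, 0 < s ∧ (d : ℤ) ∣ a ^ (k * s + T) + b ^ (k * s + T)) ↔
      ∀ j : ℕ, ∃ s : ℕ, 0 < s ∧
        (d : ℤ) ∣ a ^ (k * s + (2 * j + 1) * T % k) + b ^ (k * s + (2 * j + 1) * T % k) := by
  constructor
  · rintro ⟨s, hs, hdvd⟩ j
    set m := 2 * j + 1 with hm
    refine ⟨m * s + m * T / k, by positivity, ?_⟩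
    have hodd : Odd m := ⟨j, by ring⟩
    have h1 : (d : ℤ) ∣ a ^ ((k * s + T) * m) + b ^ ((k * s + T) * m) := by
      have := Odd.add_dvd_pow_add_pow (a ^ (k * s + T)) (b ^ (k * s + T)) hodd
      rw [← pow_mul, ← pow_mul] at this
      exact hdvd.trans this
    have hk : 0 < k := lt_of_le_of_lt (Nat.zero_le T) hT
    have harith : (k * s + T) * m = k * (m * s + m * T / k) + m * T % k := by
      calc (k * s + T) * m = k * (m * s) + m * T := by ring
        _ = k * (m * s) + (k * (m * T / k) + m * T % k) := by rw [Nat.div_add_mod]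
        _ = k * (m * s + m * T / k) + m * T % k := by ring
    rwa [harith] at h1
  · intro h
    obtain ⟨s, hs, hdvd⟩ := h 0
    refine ⟨s, hs, ?_⟩
    rwa [show (2 * 0 + 1) * T % k = T by simp [Nat.mod_eq_of_lt hT]] at hdvd
end

section
/- Let 0 ≤ T < k. Then an odd positive integer d coprime to ab is (T,k)-good with respect to (a,b) if and only if it is (k−T,k)-good with respect to (a,b). -/
private lemma key14 (a b : ℤ) (d k U V : ℕ) (hk : 0 < k) (hUV : U + V = k) :
    (∃ s : ℕ, 0 < s ∧ (d : ℤ) ∣ a ^ (k * s + U) + b ^ (k * s + U)) →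
      (∃ s : ℕ, 0 < s ∧ (d : ℤ) ∣ a ^ (k * s + V) + b ^ (k * s + V)) := by
  rintro ⟨s, hs, hdvd⟩
  set n := k * s + U with hn
  have hns : s ≤ n := by
    have : s ≤ k * s := Nat.le_mul_of_pos_left s hk
    omega
  refine ⟨4 * n - s - 1, by omega, ?_⟩
  have hexp : k * (4 * n - s - 1) + V = n * (4 * k - 1) := by
    zify [show s ≤ 4 * n by omega, show 1 ≤ 4 * n - s by omega, show 1 ≤ 4 * k by omega]
    have h1 : (U : ℤ) + V = k := by exact_mod_cast hUV
    have h2 : (n : ℤ) = k * s + U := by exact_mod_cast hn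
    linear_combination h2 + h1
  rw [hexp]
  have hodd : Odd (4 * k - 1) := ⟨2 * k - 1, by omega⟩
  calc (d : ℤ) ∣ a ^ n + b ^ n := hdvd
    _ ∣ (a ^ n) ^ (4 * k - 1) + (b ^ n) ^ (4 * k - 1) :=
        hodd.add_dvd_pow_add_pow _ _
    _ = a ^ (n * (4 * k - 1)) + b ^ (n * (4 * k - 1)) := by rw [← pow_mul, ← pow_mul]

/-- an odd positive `d` coprime to `ab` is `(T,k)`-good w.r.t. `(a,b)`
iff it is `(k−T,k)`-good w.r.t. `(a,b)`. -/
theorem stmt_14 (a b : ℤ) (ha : a ≠ 0) (hb : b ≠ 0) (hab : IsCoprime a b)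
    (k T : ℕ) (hT : T < k)
    (d : ℕ) (hd0 : 0 < d) (hd : Odd d) (hdab : IsCoprime (d : ℤ) (a * b)) :
    (∃ s : ℕ, 0 < s ∧ (d : ℤ) ∣ a ^ (k * s + T) + b ^ (k * s + T)) ↔
      (∃ s : ℕ, 0 < s ∧ (d : ℤ) ∣ a ^ (k * s + (k - T)) + b ^ (k * s + (k - T))) := by
  constructor
  · exact key14 a b d k T (k - T) (by omega) (by omega)
  · exact key14 a b d k (k - T) T (by omega) (by omega)
end

section
/- Let k be odd and 0 ≤ T < k. Then every odd (T,k)-good integer with respect to (a,b) is also (0,k)-good with respect to (a,b). -/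
/-- for odd `k` and `0 ≤ T < k`, every odd `(T,k)`-good integer
w.r.t. `(a,b)` is also `(0,k)`-good w.r.t. `(a,b)`. -/
theorem stmt_15 (a b : ℤ) (ha : a ≠ 0) (hb : b ≠ 0) (hab : IsCoprime a b)
    (k T : ℕ) (hk : Odd k) (hT : T < k)
    (d : ℕ) (hd : Odd d)
    (h : ∃ s : ℕ, 0 < s ∧ (d : ℤ) ∣ a ^ (k * s + T) + b ^ (k * s + T)) :
    ∃ s : ℕ, 0 < s ∧ (d : ℤ) ∣ a ^ (k * s) + b ^ (k * s) := by
  obtain ⟨s, hs, hdvd⟩ := h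
  refine ⟨k * s + T, ?_, ?_⟩
  · have hk0 : 0 < k := Nat.pos_of_ne_zero (by omega)
    positivity
  · have key : a ^ (k * s + T) + b ^ (k * s + T) ∣
        (a ^ (k * s + T)) ^ k + (b ^ (k * s + T)) ^ k :=
      Odd.add_dvd_pow_add_pow _ _ hk
    rw [← pow_mul, ← pow_mul, Nat.mul_comm (k * s + T) k] at key
    exact hdvd.trans key
end

section
/- Let ℓ be an odd prime and let 1 ≤ T, T' ≤ ℓ−1. Then an odd integer d coprime to ab is (T,ℓ)-good with respect to (a,b) if and only if it is (T',ℓ)-good with respect to (a,b); and in that case it is also (0,ℓ)-good with respect to (a,b). -/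
lemma key_mul (a b : ℤ) (d n m : ℕ) (hm : Odd m)
    (h : (d : ℤ) ∣ a ^ n + b ^ n) : (d : ℤ) ∣ a ^ (n * m) + b ^ (n * m) := by
  rw [pow_mul, pow_mul]
  exact h.trans (hm.add_dvd_pow_add_pow _ _)

lemma one_dir (a b : ℤ) (ℓ : ℕ) (hℓ : ℓ.Prime) (hℓodd : Odd ℓ)
    (T T' : ℕ) (hT1 : 1 ≤ T) (hT2 : T ≤ ℓ - 1) (hT'1 : 1 ≤ T') (hT'2 : T' ≤ ℓ - 1)
    (d : ℕ) :
    (∃ s : ℕ, 0 < s ∧ (d : ℤ) ∣ a ^ (ℓ * s + T) + b ^ (ℓ * s + T)) →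
      ∃ s : ℕ, 0 < s ∧ (d : ℤ) ∣ a ^ (ℓ * s + T') + b ^ (ℓ * s + T') := by
  haveI := Fact.mk hℓ
  rintro ⟨s, hs, hdvd⟩
  have hℓ2 : 2 ≤ ℓ := hℓ.two_le
  have hTlt : T < ℓ := lt_of_le_of_lt hT2 (by omega)
  have hT'lt : T' < ℓ := lt_of_le_of_lt hT'2 (by omega)
  have hTne : (T : ZMod ℓ) ≠ 0 := by
    rw [Ne, ZMod.natCast_eq_zero_iff]
    intro hdvd'
    have := Nat.le_of_dvd (by omega) hdvd'
    omega
  set n : ℕ := ℓ * s + T with hn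
  set u : ℕ := ((T' : ZMod ℓ) / (T : ZMod ℓ)).val with hu
  have hucast : (u : ZMod ℓ) = (T' : ZMod ℓ) / (T : ZMod ℓ) := by rw [hu, ZMod.natCast_val, ZMod.cast_id]
  set m : ℕ := if Even u then u + ℓ else u with hm
  have hmodd : Odd m := by
    rcases Nat.even_or_odd u with he | ho
    · simp only [hm, if_pos he]
      exact he.add_odd hℓodd
    · simp only [hm, if_neg (Nat.not_even_iff_odd.mpr ho)]
      exact ho
  have hmpos : 0 < m := by
    rcases Nat.even_or_odd u with he | ho
    · simp only [hm, if_pos he]; omega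
    · simp only [hm, if_neg (Nat.not_even_iff_odd.mpr ho)]
      exact ho.pos
  have hmcast : (m : ZMod ℓ) = (u : ZMod ℓ) := by
    rcases Nat.even_or_odd u with he | ho
    · simp [hm, if_pos he]
    · simp [hm, if_neg (Nat.not_even_iff_odd.mpr ho)]
  have hnm : ((n * m : ℕ) : ZMod ℓ) = ((T' : ℕ) : ZMod ℓ) := by
    push_cast
    rw [hmcast, hucast, hn]
    push_cast
    simp [ZMod.natCast_self]
    field_simp
  have hmod : n * m ≡ T' [MOD ℓ] := (ZMod.natCast_eq_natCast_iff _ _ _).mp hnm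
  have hnge : ℓ + 1 ≤ n := by
    have : ℓ * 1 ≤ ℓ * s := Nat.mul_le_mul_left ℓ hs
    omega
  have hle : T' ≤ n * m := by
    have : n * 1 ≤ n * m := Nat.mul_le_mul_left n hmpos
    omega
  have hdvd2 : ℓ ∣ n * m - T' := (Nat.modEq_iff_dvd' hle).mp hmod.symm
  obtain ⟨s', hs'⟩ := hdvd2
  have hs'pos : 0 < s' := by
    rcases Nat.eq_zero_or_pos s' with h0 | h
    · exfalso
      rw [h0, Nat.mul_zero] at hs'
      have : n * 1 ≤ n * m := Nat.mul_le_mul_left n hmpos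
      omega
    · exact h
  refine ⟨s', hs'pos, ?_⟩
  have heq : ℓ * s' + T' = n * m := by omega
  rw [heq]
  exact key_mul a b d n m hmodd hdvd

/-- for an odd prime `ℓ` and `1 ≤ T, T' ≤ ℓ−1`, an odd integer `d`
coprime to `ab` is `(T,ℓ)`-good iff it is `(T',ℓ)`-good; and in that case it is
also `(0,ℓ)`-good. -/
theorem stmt_16 (a b : ℤ) (ha : a ≠ 0) (hb : b ≠ 0) (hab : IsCoprime a b)
    (ℓ : ℕ) (hℓ : ℓ.Prime) (hℓodd : Odd ℓ)
    (T T' : ℕ) (hT1 : 1 ≤ T) (hT2 : T ≤ ℓ - 1) (hT'1 : 1 ≤ T') (hT'2 : T' ≤ ℓ - 1)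
    (d : ℕ) (hd : Odd d) (hdab : IsCoprime (d : ℤ) (a * b)) :
    ((∃ s : ℕ, 0 < s ∧ (d : ℤ) ∣ a ^ (ℓ * s + T) + b ^ (ℓ * s + T)) ↔
      (∃ s : ℕ, 0 < s ∧ (d : ℤ) ∣ a ^ (ℓ * s + T') + b ^ (ℓ * s + T'))) ∧
    ((∃ s : ℕ, 0 < s ∧ (d : ℤ) ∣ a ^ (ℓ * s + T) + b ^ (ℓ * s + T)) →
      ∃ s : ℕ, 0 < s ∧ (d : ℤ) ∣ a ^ (ℓ * s) + b ^ (ℓ * s)) := by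
  constructor
  · constructor
    · exact one_dir a b ℓ hℓ hℓodd T T' hT1 hT2 hT'1 hT'2 d
    · exact one_dir a b ℓ hℓ hℓodd T' T hT'1 hT'2 hT1 hT2 d
  · rintro ⟨s, hs, hdvd⟩
    refine ⟨ℓ * s + T, by positivity, ?_⟩
    have := key_mul a b d (ℓ * s + T) ℓ hℓodd hdvd
    rwa [Nat.mul_comm] at this
end

section
/- Let q be a prime power, G a finite abelian group (written additively) with gcd(q, |G|) = 1, and 0 ≤ T < k integers. For g ∈ G of order d, the q^k-cyclotomic class S_{q^k}(g) = {q^{kj}·g : j ≥ 0} satisfies S_{q^k}(g) = S_{q^k}(−q^T·g) if and only if d is (T,k)-good with respect to (q,1), i.e., d divides q^{ks+T} + 1 for some positive integer s. -/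
/-- for a prime power `q`, a finite abelian group `G` with
`gcd(q,|G|)=1`, `0 ≤ T < k`, and `g ∈ G` of order `d`, the `q^k`-cyclotomic class
of `g` equals that of `−q^T·g` iff `d ∣ q^(ks+T) + 1` for some positive `s`. -/
theorem stmt_17 (q : ℕ) (hq : IsPrimePow q)
    (G : Type*) [AddCommGroup G] [Fintype G]
    (hG : Nat.Coprime q (Fintype.card G))
    (k T : ℕ) (hT : T < k) (g : G) :
    ({x : G | ∃ j : ℕ, x = q ^ (k * j) • g} =
      {x : G | ∃ j : ℕ, x = q ^ (k * j) • (-(q ^ T • g))}) ↔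
      ∃ s : ℕ, 0 < s ∧ addOrderOf g ∣ q ^ (k * s + T) + 1 := by
  set d := addOrderOf g with hd
  have hd0 : 0 < d := addOrderOf_pos g
  have hcop : Nat.Coprime q d :=
    Nat.Coprime.coprime_dvd_right (addOrderOf_dvd_card) hG
  -- congruent exponents give equal smuls
  have hsm : ∀ a b : ℕ, a ≡ b [MOD d] → a • g = b • g := by
    intro a b hab
    rw [← mod_addOrderOf_nsmul g a, ← mod_addOrderOf_nsmul g b, ← hd, hab]
  have hneg : ∀ n : ℕ, (n • g = -g ↔ d ∣ n + 1) := by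
    intro n
    rw [eq_neg_iff_add_eq_zero, ← succ_nsmul]
    exact (addOrderOf_dvd_iff_nsmul_eq_zero).symm
  -- rewrite elements of the second set
  have hform : ∀ j : ℕ, q ^ (k * j) • (-(q ^ T • g)) = -(q ^ (k * j + T) • g) := by
    intro j
    rw [smul_neg, smul_smul, ← pow_add]
  constructor
  · intro h
    have hg : g ∈ {x : G | ∃ j : ℕ, x = q ^ (k * j) • g} := ⟨0, by simp⟩
    rw [h] at hg
    obtain ⟨j, hj⟩ := hg
    rw [hform] at hj
    have hj' : q ^ (k * j + T) • g = -g := by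
      have := congrArg Neg.neg hj
      rw [neg_neg] at this
      exact this.symm
    have hdvd : d ∣ q ^ (k * j + T) + 1 := (hneg _).1 hj'
    rcases Nat.eq_zero_or_pos j with hj0 | hj0
    · subst hj0
      simp only [Nat.mul_zero, Nat.zero_add] at hdvd
      refine ⟨d.totient, Nat.totient_pos.2 hd0, ?_⟩
      have heu : (q ^ k) ^ d.totient ≡ 1 [MOD d] :=
        Nat.ModEq.pow_totient (hcop.pow_left k)
      have h2 : q ^ (k * d.totient + T) + 1 ≡ q ^ T + 1 [MOD d] := by
        rw [pow_add, pow_mul]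
        calc (q ^ k) ^ d.totient * q ^ T + 1
            ≡ 1 * q ^ T + 1 [MOD d] := ((heu.mul_right _).add_right 1)
          _ = q ^ T + 1 := by ring
      exact (Nat.modEq_zero_iff_dvd).1
        (h2.trans ((Nat.modEq_zero_iff_dvd).2 hdvd))
    · exact ⟨j, hj0, hdvd⟩
  · rintro ⟨s, hs0, hsd⟩
    have h1 : q ^ (k * s + T) • g = -g := (hneg _).2 hsd
    have hmul : ∀ a b : ℕ, q ^ (a + b) • g = q ^ a • (q ^ b • g) := by
      intro a b; rw [pow_add, mul_smul]
    -- period 2*(k*s+T)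
    have hN : ∀ a : ℕ, q ^ (a + 2 * (k * s + T)) • g = q ^ a • g := by
      intro a
      have : a + 2 * (k * s + T) = a + (k * s + T) + (k * s + T) := by ring
      rw [this, hmul, h1, smul_neg, hmul, h1, smul_neg, neg_neg]
    have hNt : ∀ a t : ℕ, q ^ (a + 2 * (k * s + T) * t) • g = q ^ a • g := by
      intro a t
      induction t with
      | zero => simp
      | succ t ih =>
        have : a + 2 * (k * s + T) * (t + 1)
            = a + 2 * (k * s + T) * t + 2 * (k * s + T) := by ring
        rw [this, hN, ih]
    ext x
    simp only [Set.mem_setOf_eq]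
    constructor
    · rintro ⟨j, rfl⟩
      refine ⟨j + s, ?_⟩
      rw [hform]
      have : k * (j + s) + T = k * j + (k * s + T) := by ring
      rw [this, hmul, h1, smul_neg, neg_neg]
    · rintro ⟨j, rfl⟩
      obtain ⟨K, rfl⟩ : ∃ K, k = K + 1 := ⟨k - 1, by omega⟩
      refine ⟨j + s + 2 * K * s + 2 * T, ?_⟩
      have hexp : (K + 1) * (j + s + 2 * K * s + 2 * T)
          = ((K + 1) * j + ((K + 1) * s + T) + T) + 2 * ((K + 1) * s + T) * K := by
        ring
      rw [hform, hexp, hNt]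
      have h3 : (K + 1) * j + ((K + 1) * s + T) + T
          = ((K + 1) * j + T) + ((K + 1) * s + T) := by ring
      have h4 : q ^ ((K + 1) * j + T + ((K + 1) * s + T)) • g
          = q ^ ((K + 1) * j + T) • (q ^ ((K + 1) * s + T) • g) := hmul _ _
      rw [h3, h4, h1, smul_neg]
end

section
/- Let q be a prime power, G a finite abelian group with gcd(q,|G|)=1, g ∈ G, and 0 ≤ T < k. If S_{q^k}(g) = S_{q^k}(−q^T·g), then S_{q^k}(g) = S_{q^k}(−q^ℓ·g) for every ℓ ∈ C_k(T), i.e., for every ℓ ≡ (2i+1)T (mod k) with i ≥ 0. -/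
/-- if the `q^k`-cyclotomic class of `g` equals that of `−q^T·g`,
then it equals that of `−q^ℓ·g` for every `ℓ ≡ (2i+1)T (mod k)` with `i ≥ 0`. -/
theorem stmt_18 (q : ℕ) (hq : IsPrimePow q)
    (G : Type*) [AddCommGroup G] [Fintype G]
    (hG : Nat.Coprime q (Fintype.card G))
    (k T : ℕ) (hT : T < k) (g : G)
    (h : {x : G | ∃ j : ℕ, x = q ^ (k * j) • g} =
      {x : G | ∃ j : ℕ, x = q ^ (k * j) • (-(q ^ T • g))}) :
    ∀ ℓ i : ℕ, ℓ % k = (2 * i + 1) * T % k →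
      {x : G | ∃ j : ℕ, x = q ^ (k * j) • g} =
        {x : G | ∃ j : ℕ, x = q ^ (k * j) • (-(q ^ ℓ • g))} := by
  intro ℓ i hℓ
  set c := Fintype.card G with hc
  have hc0 : 0 < c := Fintype.card_pos
  set N := c.totient with hNdef
  have hN1 : 0 < N := Nat.totient_pos.mpr hc0
  have hmodsmul : ∀ (m : ℕ) (x : G), m • x = (m % c) • x := by
    intro m x
    conv_lhs => rw [← Nat.div_add_mod m c]
    rw [add_smul, mul_comm, mul_smul]
    simp [hc, card_nsmul_eq_zero]
  have hone : ∀ (m : ℕ) (x : G), q ^ (k * (N * m)) • x = x := by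
    intro m x
    have h1 : (q ^ k).Coprime c := Nat.Coprime.pow_left k hG
    have h2 : (q ^ k) ^ N ≡ 1 [MOD c] := Nat.ModEq.pow_totient h1
    have h3 : q ^ (k * (N * m)) ≡ 1 [MOD c] := by
      have he : q ^ (k * (N * m)) = ((q ^ k) ^ N) ^ m := by
        rw [← pow_mul, ← pow_mul]
      rw [he]
      simpa using h2.pow m
    rw [hmodsmul, h3, ← hmodsmul, one_smul]
  have hinv : ∀ (a : ℕ) (x : G), ∃ b : ℕ, q ^ (k * b) • (q ^ (k * a) • x) = x := by
    intro a x
    refine ⟨N * (a + 1) - a, ?_⟩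
    have hle : a ≤ N * (a + 1) := le_trans (Nat.le_succ a) (Nat.le_mul_of_pos_left _ hN1)
    rw [smul_smul, ← pow_add, ← Nat.mul_add, Nat.sub_add_cancel hle]
    exact hone (a + 1) x
  have hcomb : ∀ (a b : ℕ) (x : G), q ^ a • (q ^ b • x) = q ^ (a + b) • x := by
    intro a b x
    rw [smul_smul, ← pow_add]
  have hbase : ∃ a : ℕ, -(q ^ T • g) = q ^ (k * a) • g := by
    have hm : -(q ^ T • g) ∈ {x : G | ∃ j : ℕ, x = q ^ (k * j) • (-(q ^ T • g))} :=
      ⟨0, by simp⟩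
    rw [← h] at hm
    exact hm
  have hmain : ∀ n : ℕ, ∃ a : ℕ, -(q ^ ((2 * n + 1) * T) • g) = q ^ (k * a) • g := by
    intro n
    induction n with
    | zero => simpa using hbase
    | succ n ih =>
      obtain ⟨a, ha⟩ := ih
      obtain ⟨b, hb⟩ := hbase
      have hTg : q ^ T • g = -(q ^ (k * b) • g) := by
        rw [← hb, neg_neg]
      have h2T : q ^ (2 * T) • g = q ^ (k * (2 * b)) • g := by
        have hthis : q ^ (2 * T) • g = q ^ T • (q ^ T • g) := by
          rw [hcomb, two_mul]
        rw [hthis, hTg, smul_neg, smul_smul, mul_comm (q ^ T) (q ^ (k * b)),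
          ← smul_smul, hTg, smul_neg, neg_neg, hcomb]
        congr 1
        ring
      have e1 : q ^ ((2 * (n + 1) + 1) * T) • g
          = q ^ (2 * T) • (q ^ ((2 * n + 1) * T) • g) := by
        rw [hcomb]
        congr 1
        ring
      refine ⟨2 * b + a, ?_⟩
      calc -(q ^ ((2 * (n + 1) + 1) * T) • g)
          = q ^ (2 * T) • (-(q ^ ((2 * n + 1) * T) • g)) := by rw [e1, smul_neg]
        _ = q ^ (2 * T) • (q ^ (k * a) • g) := by rw [ha]
        _ = q ^ (k * a) • (q ^ (2 * T) • g) := by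
            rw [smul_smul, mul_comm (q ^ (2 * T)) (q ^ (k * a)), ← smul_smul]
        _ = q ^ (k * a) • (q ^ (k * (2 * b)) • g) := by rw [h2T]
        _ = q ^ (k * (2 * b + a)) • g := by rw [hcomb]; congr 1; ring
  obtain ⟨a, ha⟩ := hmain i
  set M := (2 * i + 1) * T with hM
  have hMeq : k * (M / k) + M % k = M := Nat.div_add_mod M k
  have hr1 : q ^ (k * (M / k)) • (-(q ^ (M % k) • g)) = q ^ (k * a) • g := by
    rw [smul_neg, hcomb, hMeq, ha]
  obtain ⟨b, hb⟩ := hinv (M / k) (-(q ^ (M % k) • g))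
  have hr : -(q ^ (M % k) • g) = q ^ (k * (b + a)) • g := by
    rw [← hb, hr1, hcomb, ← Nat.mul_add]
  have hℓeq : k * (ℓ / k) + M % k = ℓ := by
    conv_lhs => rw [← hℓ]
    exact Nat.div_add_mod ℓ k
  set d := ℓ / k + (b + a) with hdd
  have hd : -(q ^ ℓ • g) = q ^ (k * d) • g := by
    calc -(q ^ ℓ • g)
        = q ^ (k * (ℓ / k)) • (-(q ^ (M % k) • g)) := by rw [smul_neg, hcomb, hℓeq]
      _ = q ^ (k * (ℓ / k)) • (q ^ (k * (b + a)) • g) := by rw [hr]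
      _ = q ^ (k * d) • g := by rw [hcomb, ← Nat.mul_add]
  ext x
  simp only [Set.mem_setOf_eq]
  constructor
  · rintro ⟨j, rfl⟩
    obtain ⟨e, he⟩ := hinv d g
    refine ⟨j + e, ?_⟩
    rw [hd, Nat.mul_add k j e, pow_add, mul_smul, he]
  · rintro ⟨j, rfl⟩
    exact ⟨j + d, by rw [hd, hcomb, ← Nat.mul_add]⟩
end

section
/- Let r be a positive integer, 0 ≤ T < 2^r, and let d > 1 be an odd integer with gcd(d,ab)=1. If 1 ≤ T < 2^r with ν₂(T) = t, then d is (T, 2^r)-good with respect to (a,b) if and only if ν₂(ord_p(a·b⁻¹)) = t+1 for every prime p dividing d. If T = 0, then d is (0, 2^r)-good with respect to (a,b) if and only if there exists α ≥ r+1 with ν₂(ord_p(a·b⁻¹)) = α for every prime p dividing d. -/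
/-!
For an odd prime `p ∤ ab` put `u = a b⁻¹ ∈ ZMod p`. Then `p ∣ a ^ N + b ^ N` iff `u ^ N = -1`,
iff `ord u ∣ 2N` but `ord u ∤ N`, iff `ν₂ (ord u) = ν₂ N + 1` and the odd part of `ord u`
divides `N`. This gives necessity, since `ν₂ (2 ^ r s + T) = ν₂ T` for `0 < T < 2 ^ r`.
Conversely, if all `ν₂ (ord_p u)` equal `β + 1`, let `L` be the odd part of `∏ ord_p u`: every
`n` with `ν₂ n = β` and `L ∣ n` has `p ∣ a ^ n + b ^ n` for all `p ∣ d`, and lifting the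
exponent turns this into `d ∣ a ^ (n d) + b ^ (n d)`. It remains to choose `s` with
`L d ∣ 2 ^ r s + T`, which is possible as `L d` is odd.
-/

theorem padicValNat_mul_of_not_dvd {p m n : ℕ} [Fact p.Prime] (hm : ¬ p ∣ m) (hn : n ≠ 0) :
    padicValNat p (m * n) = padicValNat p n := by
  have hm0 : m ≠ 0 := by rintro rfl; exact hm (dvd_zero p)
  rw [padicValNat.mul hm0 hn, padicValNat.eq_zero_of_not_dvd hm, zero_add]

theorem padicValNat_pow_mul_add {p r T : ℕ} [Fact p.Prime] (s : ℕ) (hT0 : T ≠ 0)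
    (hT : T < p ^ r) : padicValNat p (p ^ r * s + T) = padicValNat p T := by
  have hlt : padicValNat p T < r :=
    (padicValNat_le_nat_log T).trans_lt (Nat.log_lt_of_lt_pow hT0 hT)
  apply Nat.cast_injective (R := ℕ∞)
  rw [padicValNat_eq_emultiplicity (by omega), padicValNat_eq_emultiplicity hT0,
    ← Int.natCast_emultiplicity, ← Int.natCast_emultiplicity]
  push_cast
  apply emultiplicity_add_of_gt
  rw [Int.natCast_emultiplicity, ← padicValNat_eq_emultiplicity hT0]
  exact (Nat.cast_lt.mpr hlt).trans_le
    (le_emultiplicity_of_pow_dvd (dvd_mul_right _ _))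

theorem dvd_two_mul_and_not_dvd_iff {m n : ℕ} (hn : n ≠ 0) :
    m ∣ 2 * n ∧ ¬ m ∣ n ↔ padicValNat 2 m = padicValNat 2 n + 1 ∧ ordCompl[2] m ∣ n := by
  rcases eq_or_ne m 0 with rfl | hm
  · simp [hn]
  have hsplit : 2 ^ padicValNat 2 m * ordCompl[2] m = m := by
    rw [← Nat.factorization_def m Nat.prime_two]
    exact Nat.ordProj_mul_ordCompl_eq_self m 2
  have hcop : Nat.Coprime 2 (ordCompl[2] m) := Nat.coprime_ordCompl Nat.prime_two hm
  have hdvd (x : ℕ) (hx : x ≠ 0) :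
      m ∣ x ↔ padicValNat 2 m ≤ padicValNat 2 x ∧ ordCompl[2] m ∣ x := by
    rw [← padicValNat_dvd_iff_le hx]
    nth_rewrite 1 [← hsplit]
    exact ⟨fun h => ⟨dvd_of_mul_right_dvd h, dvd_of_mul_left_dvd h⟩,
      fun h => (hcop.pow_left _).mul_dvd_of_dvd_of_dvd h.1 h.2⟩
  rw [hdvd _ (by omega), hdvd n hn, padicValNat.mul two_ne_zero hn, padicValNat_self,
    hcop.symm.dvd_mul_left]
  omega

theorem exists_pos_dvd_mul_add {c m : ℕ} (hc : c ≠ 0) (hcm : Nat.Coprime m c) (x : ℕ) :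
    ∃ s, 0 < s ∧ c ∣ m * s + x := by
  have : NeZero c := ⟨hc⟩
  set u := ZMod.unitOfCoprime m hcm
  refine ⟨(-(x : ZMod c) * ↑u⁻¹).val + c, by omega, ?_⟩
  rw [← ZMod.natCast_eq_zero_iff]
  push_cast
  rw [ZMod.natCast_val, ZMod.cast_id, ZMod.natCast_self, ← ZMod.coe_unitOfCoprime m hcm]
  linear_combination (-(x : ZMod c)) * u.mul_inv

theorem pow_eq_neg_one_iff_orderOf_dvd {R : Type*} [Ring R] [NoZeroDivisors R]
    (h : (-1 : R) ≠ 1) (u : R) (n : ℕ) :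
    u ^ n = -1 ↔ orderOf u ∣ 2 * n ∧ ¬ orderOf u ∣ n := by
  simp only [orderOf_dvd_iff_pow_eq_one, pow_mul', sq]
  constructor
  · intro hu
    rw [hu]
    exact ⟨by norm_num, h⟩
  · rintro ⟨h2, h1⟩
    exact (mul_self_eq_one_iff.mp h2).resolve_left h1

theorem Int.natCast_dvd_pow_add_pow_iff {p : ℕ} [Fact p.Prime] {a b : ℤ}
    (hb : ¬ (p : ℤ) ∣ b) (n : ℕ) :
    (p : ℤ) ∣ a ^ n + b ^ n ↔ ((a : ZMod p) * (b : ZMod p)⁻¹) ^ n = -1 := by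
  have hbn : (b : ZMod p) ^ n ≠ 0 :=
    pow_ne_zero _ (by rwa [Ne, ZMod.intCast_zmod_eq_zero_iff_dvd])
  rw [← ZMod.intCast_zmod_eq_zero_iff_dvd, mul_pow, inv_pow, ← div_eq_mul_inv, div_eq_iff hbn]
  push_cast
  constructor <;> intro h <;> linear_combination h

theorem Int.natCast_dvd_pow_add_pow_iff_padicValNat_orderOf {p : ℕ} [Fact p.Prime] (hp2 : p ≠ 2)
    {a b : ℤ} (hb : ¬ (p : ℤ) ∣ b) {n : ℕ} (hn : n ≠ 0) :
    (p : ℤ) ∣ a ^ n + b ^ n ↔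
      padicValNat 2 (orderOf ((a : ZMod p) * (b : ZMod p)⁻¹)) = padicValNat 2 n + 1 ∧
        ordCompl[2] (orderOf ((a : ZMod p) * (b : ZMod p)⁻¹)) ∣ n := by
  have : Fact (2 < p) := ⟨(Fact.out : p.Prime).two_le.lt_of_ne' hp2⟩
  rw [Int.natCast_dvd_pow_add_pow_iff hb, pow_eq_neg_one_iff_orderOf_dvd ZMod.neg_one_ne_one,
    dvd_two_mul_and_not_dvd_iff hn]

theorem Int.not_natCast_dvd_of_mem_primeFactors {d p : ℕ} {x : ℤ} (h : IsCoprime (d : ℤ) x)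
    (hp : p ∈ d.primeFactors) : ¬ (p : ℤ) ∣ x := fun hpx =>
  (Nat.prime_iff_prime_int.mp (Nat.prime_of_mem_primeFactors hp)).not_isUnit
    (h.isUnit_of_dvd' (Int.natCast_dvd_natCast.mpr (Nat.dvd_of_mem_primeFactors hp)) hpx)

/-- By lifting the exponent, `ν_p (a ^ (n d) + b ^ (n d)) = ν_p (a ^ n + b ^ n) + ν_p d` for every
`p ∣ d`. -/
theorem Int.natCast_dvd_pow_mul_add_pow_mul {a b : ℤ} {d n : ℕ} (hd : Odd d)
    (h : ∀ p ∈ d.primeFactors, (p : ℤ) ∣ a ^ n + b ^ n ∧ ¬ (p : ℤ) ∣ a) :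
    (d : ℤ) ∣ a ^ (n * d) + b ^ (n * d) := by
  rw [Int.natCast_dvd, Nat.dvd_iff_prime_pow_dvd_dvd]
  intro p k hp hpk
  rcases k.eq_zero_or_pos with rfl | hk
  · simp
  have hpd : p ∣ d := (dvd_pow_self p hk.ne').trans hpk
  obtain ⟨hdvd, hpa⟩ := h p (Nat.mem_primeFactors.mpr ⟨hp, hpd, hd.pos.ne'⟩)
  have lte := Int.emultiplicity_pow_add_pow hp (hd.of_dvd_nat hpd) hdvd
    (fun hpan => hpa (Int.Prime.dvd_pow' hp hpan)) hd
  rw [← Int.natCast_dvd, pow_mul, pow_mul]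
  push_cast
  apply pow_dvd_of_le_emultiplicity
  rw [lte]
  exact (le_emultiplicity_of_pow_dvd hpk).trans le_add_self

section OddModulus

variable {a b : ℤ} {d : ℕ} (hd : Odd d) (hdab : IsCoprime (d : ℤ) (a * b))
include hd hdab

theorem natCast_dvd_pow_add_pow_iff_of_mem_primeFactors {p n : ℕ} (hp : p ∈ d.primeFactors)
    (hn : n ≠ 0) :
    (p : ℤ) ∣ a ^ n + b ^ n ↔
      padicValNat 2 (orderOf ((a : ZMod p) * (b : ZMod p)⁻¹)) = padicValNat 2 n + 1 ∧
        ordCompl[2] (orderOf ((a : ZMod p) * (b : ZMod p)⁻¹)) ∣ n := by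
  have := Fact.mk (Nat.prime_of_mem_primeFactors hp)
  exact Int.natCast_dvd_pow_add_pow_iff_padicValNat_orderOf
    (hd.ne_two_of_dvd_nat (Nat.dvd_of_mem_primeFactors hp))
    (Int.not_natCast_dvd_of_mem_primeFactors hdab.of_mul_right_right hp) hn

theorem padicValNat_orderOf_of_dvd_pow_add_pow {N : ℕ} (hN : N ≠ 0)
    (h : (d : ℤ) ∣ a ^ N + b ^ N) {p : ℕ} (hp : p ∈ d.primeFactors) :
    padicValNat 2 (orderOf ((a : ZMod p) * (b : ZMod p)⁻¹)) = padicValNat 2 N + 1 :=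
  ((natCast_dvd_pow_add_pow_iff_of_mem_primeFactors hd hdab hp hN).mp
    ((Int.natCast_dvd_natCast.mpr (Nat.dvd_of_mem_primeFactors hp)).trans h)).1

theorem exists_odd_forall_dvd_pow_add_pow {β : ℕ}
    (hval : ∀ p ∈ d.primeFactors,
      padicValNat 2 (orderOf ((a : ZMod p) * (b : ZMod p)⁻¹)) = β + 1) :
    ∃ L, Odd L ∧ ∀ N ≠ 0, padicValNat 2 N = β → L * d ∣ N → (d : ℤ) ∣ a ^ N + b ^ N := by
  set P := ∏ p ∈ d.primeFactors, orderOf ((a : ZMod p) * (b : ZMod p)⁻¹)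
  have hP : P ≠ 0 := Finset.prod_ne_zero_iff.mpr fun p hp h0 => by
    simpa [h0] using hval p hp
  have hL : Odd (ordCompl[2] P) :=
    Nat.coprime_two_left.mp (Nat.coprime_ordCompl Nat.prime_two hP)
  refine ⟨ordCompl[2] P, hL, ?_⟩
  rintro N hN hNβ ⟨q, rfl⟩
  have hn : ordCompl[2] P * q ≠ 0 := fun h => hN (by rw [mul_right_comm, h, zero_mul])
  rw [mul_right_comm] at hNβ ⊢
  rw [mul_comm, padicValNat_mul_of_not_dvd hd.not_two_dvd_nat hn] at hNβ
  refine Int.natCast_dvd_pow_mul_add_pow_mul hd fun p hp => ⟨?_,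
    Int.not_natCast_dvd_of_mem_primeFactors hdab.of_mul_right_left hp⟩
  refine (natCast_dvd_pow_add_pow_iff_of_mem_primeFactors hd hdab hp hn).mpr
    ⟨by rw [hval p hp, hNβ], ?_⟩
  exact (Nat.ordCompl_dvd_ordCompl_of_dvd (Finset.dvd_prod_of_mem _ hp) 2).trans
    (dvd_mul_right _ _)

end OddModulus

theorem stmt_19_general (a b : ℤ)
    (r : ℕ) (T : ℕ) (hT : T < 2 ^ r)
    (d : ℕ) (hd : Odd d) (hdab : IsCoprime (d : ℤ) (a * b)) :
    ((1 ≤ T) →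
      ((∃ s : ℕ, 0 < s ∧ (d : ℤ) ∣ a ^ (2 ^ r * s + T) + b ^ (2 ^ r * s + T)) ↔
        ∀ p ∈ d.primeFactors,
          padicValNat 2 (orderOf ((a : ZMod p) * (b : ZMod p)⁻¹)) =
            padicValNat 2 T + 1)) ∧
    (T = 0 →
      ((∃ s : ℕ, 0 < s ∧ (d : ℤ) ∣ a ^ (2 ^ r * s) + b ^ (2 ^ r * s)) ↔
        ∃ α : ℕ, r + 1 ≤ α ∧ ∀ p ∈ d.primeFactors,
          padicValNat 2 (orderOf ((a : ZMod p) * (b : ZMod p)⁻¹)) = α)) := by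
  refine ⟨fun hT1 => ⟨?_, fun hval => ?_⟩, ?_⟩
  · rintro ⟨s, -, hdvd⟩ p hp
    rw [← padicValNat_pow_mul_add s (by omega) hT]
    exact padicValNat_orderOf_of_dvd_pow_add_pow hd hdab (by positivity) hdvd hp
  · obtain ⟨L, hL, hLd⟩ := exists_odd_forall_dvd_pow_add_pow hd hdab hval
    obtain ⟨s, hs, hdvd⟩ := exists_pos_dvd_mul_add (hL.mul hd).pos.ne'
      ((Nat.coprime_two_left.mpr (hL.mul hd)).pow_left r) T
    exact ⟨s, hs, hLd _ (by positivity) (padicValNat_pow_mul_add s (by omega) hT) hdvd⟩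
  rintro rfl
  constructor
  · rintro ⟨s, hs, hdvd⟩
    have hrs : r ≤ padicValNat 2 (2 ^ r * s) :=
      (padicValNat_dvd_iff_le (by positivity)).mp (dvd_mul_right _ _)
    exact ⟨_, by omega, fun p hp =>
      padicValNat_orderOf_of_dvd_pow_add_pow hd hdab (by positivity) hdvd hp⟩
  · rintro ⟨α, hα, hval⟩
    obtain ⟨L, hL, hLd⟩ := exists_odd_forall_dvd_pow_add_pow hd hdab (β := α - 1)
      fun p hp => by rw [hval p hp]; omega
    have hN : 2 ^ r * (2 ^ (α - 1 - r) * (L * d)) = (L * d) * 2 ^ (α - 1) := by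
      rw [← mul_assoc, ← pow_add, mul_comm, Nat.add_sub_cancel' (by omega)]
    refine ⟨2 ^ (α - 1 - r) * (L * d), Nat.mul_pos (by positivity) (hL.mul hd).pos, ?_⟩
    rw [hN]
    refine hLd _ (Nat.mul_pos (hL.mul hd).pos (by positivity)).ne' ?_ (dvd_mul_right _ _)
    rw [padicValNat_mul_of_not_dvd (hL.mul hd).not_two_dvd_nat (by positivity),
      padicValNat.prime_pow]

/-- characterization of odd `(T, 2^r)`-good integers w.r.t. `(a,b)`:
for `1 ≤ T < 2^r` with `ν₂(T) = t`, goodness holds iff `ν₂(ord_p(a·b⁻¹)) = t + 1`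
for every prime `p ∣ d`; for `T = 0`, goodness holds iff there is `α ≥ r + 1` with
`ν₂(ord_p(a·b⁻¹)) = α` for every prime `p ∣ d`. -/
theorem stmt_19 (a b : ℤ) (ha : a ≠ 0) (hb : b ≠ 0) (hab : IsCoprime a b)
    (r : ℕ) (hr : 0 < r) (T : ℕ) (hT : T < 2 ^ r)
    (d : ℕ) (hd1 : 1 < d) (hd : Odd d) (hdab : IsCoprime (d : ℤ) (a * b)) :
    ((1 ≤ T) →
      ((∃ s : ℕ, 0 < s ∧ (d : ℤ) ∣ a ^ (2 ^ r * s + T) + b ^ (2 ^ r * s + T)) ↔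
        ∀ p ∈ d.primeFactors,
          padicValNat 2 (orderOf ((a : ZMod p) * (b : ZMod p)⁻¹)) =
            padicValNat 2 T + 1)) ∧
    (T = 0 →
      ((∃ s : ℕ, 0 < s ∧ (d : ℤ) ∣ a ^ (2 ^ r * s) + b ^ (2 ^ r * s)) ↔
        ∃ α : ℕ, r + 1 ≤ α ∧ ∀ p ∈ d.primeFactors,
          padicValNat 2 (orderOf ((a : ZMod p) * (b : ZMod p)⁻¹)) = α)) :=
  stmt_19_general a b r T hT d hd hdab
end
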